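/- arXiv:1807.06119 — 15 statements merged into one kernel-verified Lean document; each statement's English description precedes it below -/
import Mathlib

section
/- For integers r ≥ 3 and k ≥ 2r+2, with t = ⌊(k-1)/2⌋ and 3 ≤ r < t, we have C(k-t, r) + (k-2)·C(t, r-1) ≤ C(k-1, r). -/
/-!
Write `k - 1 = m + t` with `m = k - 1 - t ≥ t`. Vandermonde's identity expands `C(m + t, r)` as
`∑ C(m, i) C(t, r - i)`; the three terms `i = r, r - 1, 1` (distinct as `r ≥ 3`) already dominate
`C(m + 1, r) + (m + t - 1) C(t, r - 1)`, by Pascal's rule and `C(t, r - 1) ≤ C(m, r - 1)`.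
-/

open Finset

namespace Nat

theorem choose_add_three_terms_le {s : ℕ} (hs : 2 ≤ s) (m t : ℕ) :
    m.choose (s + 1) + t * m.choose s + m * t.choose s ≤ (m + t).choose (s + 1) := by
  have hsub : ({(s + 1, 0), (s, 1), (1, s)} : Finset (ℕ × ℕ)) ⊆
      HasAntidiagonal.antidiagonal (s + 1) := by
    intro x hx
    simp only [mem_insert, mem_singleton] at hx
    rcases hx with rfl | rfl | rfl <;> simp [HasAntidiagonal.mem_antidiagonal, add_comm]
  calc m.choose (s + 1) + t * m.choose s + m * t.choose s
      = ∑ ij ∈ {(s + 1, 0), (s, 1), (1, s)}, m.choose ij.1 * t.choose ij.2 := by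
        rw [sum_insert (by simp; omega), sum_insert (by simp; omega), sum_singleton]
        simp only [choose_zero_right, choose_one_right]
        ring
    _ ≤ ∑ ij ∈ HasAntidiagonal.antidiagonal (s + 1), m.choose ij.1 * t.choose ij.2 :=
        sum_le_sum_of_subset hsub
    _ = (m + t).choose (s + 1) := (add_choose_eq m t (s + 1)).symm

theorem choose_succ_add_mul_choose_le {s m t : ℕ} (hs : 2 ≤ s) (ht : 1 ≤ t) (htm : t ≤ m) :
    (m + 1).choose (s + 1) + (m + t - 1) * t.choose s ≤ (m + t).choose (s + 1) := by
  obtain ⟨u, rfl⟩ : ∃ u, t = u + 1 := ⟨t - 1, by omega⟩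
  have hmono : (u + 1).choose s ≤ m.choose s := choose_le_choose s htm
  calc (m + 1).choose (s + 1) + (m + (u + 1) - 1) * (u + 1).choose s
      = m.choose (s + 1) + m * (u + 1).choose s + (m.choose s + u * (u + 1).choose s) := by
        rw [choose_succ_succ', show m + (u + 1) - 1 = m + u by omega]
        ring
    _ ≤ m.choose (s + 1) + m * (u + 1).choose s + (m.choose s + u * m.choose s) := by
        gcongr
    _ = m.choose (s + 1) + (u + 1) * m.choose s + m * (u + 1).choose s := by ring
    _ ≤ (m + (u + 1)).choose (s + 1) := choose_add_three_terms_le hs m (u + 1)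

end Nat

theorem stmt_0_general (r k t : ℕ) (hr : 3 ≤ r)
    (ht : t = (k - 1) / 2) (hrt : r < t) :
    (k - t).choose r + (k - 2) * t.choose (r - 1) ≤ (k - 1).choose r := by
  obtain ⟨s, rfl⟩ : ∃ s, r = s + 1 := ⟨r - 1, by omega⟩
  set m := k - 1 - t
  have hkt : k - t = m + 1 := by omega
  have hk2 : k - 2 = m + t - 1 := by omega
  have hk1 : k - 1 = m + t := by omega
  rw [hkt, hk2, hk1, Nat.add_sub_cancel]
  exact Nat.choose_succ_add_mul_choose_le (by omega) (by omega) (by omega)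

theorem stmt_0 (r k t : ℕ) (hr : 3 ≤ r) (hk : 2 * r + 2 ≤ k)
    (ht : t = (k - 1) / 2) (hrt : r < t) :
    (k - t).choose r + (k - 2) * t.choose (r - 1) ≤ (k - 1).choose r :=
  stmt_0_general r k t hr ht hrt
end

section
/- For integers r ≥ 3, k with t = ⌊(k-1)/2⌋ and 3 ≤ r < t, the strict inequality C(k-t, r) + (k-3)·C(t, r-1) < C(k-1, r) - C(r, 2) holds. -/
open Finset

/-- Lower bound from Vandermonde: pick terms j ∈ {1, r-1, r}. -/
lemma vand_lb (m n r : ℕ) (hr : 3 ≤ r) :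
    m * n.choose (r - 1) + m.choose (r - 1) * n + m.choose r ≤ (m + n).choose r := by
  rw [Nat.add_choose_eq, Finset.Nat.sum_antidiagonal_eq_sum_range_succ_mk]
  have hsub : ({1, r - 1, r} : Finset ℕ) ⊆ Finset.range (r + 1) := by
    intro j hj
    simp only [Finset.mem_insert, Finset.mem_singleton] at hj
    rw [Finset.mem_range]
    omega
  calc m * n.choose (r - 1) + m.choose (r - 1) * n + m.choose r
      = ∑ j ∈ ({1, r - 1, r} : Finset ℕ), m.choose j * n.choose (r - j) := by
        rw [Finset.sum_insert (by simp; omega), Finset.sum_insert (by simp; omega),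
          Finset.sum_singleton]
        have h1 : r - 1 = 1 → False := by omega
        have : r - (r - 1) = 1 := by omega
        rw [this, Nat.sub_self]
        simp [Nat.choose_one_right]
        ring
    _ ≤ ∑ j ∈ Finset.range (r + 1), m.choose j * n.choose (r - j) :=
        Finset.sum_le_sum_of_subset hsub

theorem stmt_1 (r k t : ℕ) (hr : 3 ≤ r) (ht : t = (k - 1) / 2) (hrt : r < t) :
    ((k - t).choose r : ℤ) + (k - 3) * t.choose (r - 1) <
      (k - 1).choose r - r.choose 2 := by
  have hk : k = 2 * t + 1 ∨ k = 2 * t + 2 := by omega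
  have h1 : r.choose 2 < t.choose (r - 1) := by
    have e1 : (r + 1).choose (r - 1) = (r + 1).choose 2 := by
      have := Nat.choose_symm (n := r + 1) (k := 2) (by omega)
      simpa [show r + 1 - 2 = r - 1 by omega] using this
    have e2 : (r + 1).choose 2 = r.choose 1 + r.choose 2 := Nat.choose_succ_succ r 1
    have e3 : (r + 1).choose (r - 1) ≤ t.choose (r - 1) :=
      Nat.choose_le_choose _ (by omega)
    have : 0 < r.choose 1 := by simp [Nat.choose_one_right]; omega
    omega
  have h2 : r.choose 2 ≤ t.choose (r - 2) := by
    have e1 : (r + 1).choose (r - 2) = (r + 1).choose 3 := by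
      have := Nat.choose_symm (n := r + 1) (k := 3) (by omega)
      simpa [show r + 1 - 3 = r - 2 by omega] using this
    have e2 : (r + 1).choose 3 = r.choose 2 + r.choose 3 := Nat.choose_succ_succ r 2
    have e3 : (r + 1).choose (r - 2) ≤ t.choose (r - 2) :=
      Nat.choose_le_choose _ (by omega)
    omega
  have hpos2 : 0 < t.choose (r - 2) := Nat.choose_pos (by omega)
  have ht4 : 4 ≤ t := by omega
  rcases hk with hk | hk
  · subst hk
    have hv := vand_lb t t r hr
    rw [show t + t = 2 * t by ring] at hv
    have hp : (t + 1).choose r = t.choose (r - 1) + t.choose r := by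
      have := Nat.choose_succ_succ t (r - 1)
      simpa [show r - 1 + 1 = r by omega] using this
    rw [show 2 * t + 1 - t = t + 1 by omega, show 2 * t + 1 - 1 = 2 * t by omega]
    push_cast
    zify at hv
    rw [hp]
    push_cast
    nlinarith [h1, hv]
  · subst hk
    have hv := vand_lb t (t + 1) r hr
    rw [show t + (t + 1) = 2 * t + 1 by ring] at hv
    have hp1 : (t + 1).choose r = t.choose (r - 1) + t.choose r := by
      have := Nat.choose_succ_succ t (r - 1)
      simpa [show r - 1 + 1 = r by omega] using this
    have hp2 : (t + 1).choose (r - 1) = t.choose (r - 2) + t.choose (r - 1) := by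
      have := Nat.choose_succ_succ t (r - 2)
      simpa [show r - 2 + 1 = r - 1 by omega] using this
    have hp3 : (t + 2).choose r = (t + 1).choose (r - 1) + (t + 1).choose r := by
      have := Nat.choose_succ_succ (t + 1) (r - 1)
      simpa [show r - 1 + 1 = r by omega] using this
    rw [show 2 * t + 2 - t = t + 2 by omega, show 2 * t + 2 - 1 = 2 * t + 1 by omega]
    rw [hp2] at hv
    rw [hp3, hp2, hp1]
    push_cast
    zify at hv
    have hmul : (4 : ℤ) * t.choose (r - 2) ≤ (t : ℤ) * t.choose (r - 2) := by
      have : ((4 : ℕ) : ℤ) ≤ (t : ℤ) := by exact_mod_cast ht4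
      exact mul_le_mul_of_nonneg_right this (by positivity)
    nlinarith [h1, h2, hv, hmul, hpos2]
end

section
/- For integers r ≥ 3, k ≥ r+4, t = ⌊(k-1)/2⌋, and any integer s with k-t ≤ s ≤ k-2, we have (k-2) · max(k-s, C(k-s, r-1)) < C(k-1, r) - C(r, 2). -/
/-!
Put `n = k - 1` and `a = ⌊n/2⌋ = t`. Both `m ↦ m` and `m ↦ C(m, r-1)` are monotone, so it suffices
to treat `m = k - s = a`, i.e. to show `(n-1) max(a, C(a, r-1)) + C(r,2) < C(n, r)`.
If the maximum is `a`, this follows from `C(n, r) ≥ C(n, 3)`, a cubic in `n`, against a quadratic.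
Otherwise split `n = a + b` with `a ≤ b` and keep three terms of Vandermonde's identity
`C(a+b, r) = ∑ C(a, i) C(b, r-i)`: the terms `i = 1` and `i = r-1` already give `n C(a, r-1)`, and the
third one (`i = 2`, or `i = 0` when `r = 3`) pays for `C(r, 2)`.
-/

open Finset

namespace Nat

theorem choose_le_choose_right_of_le_half {n i j : ℕ} (hij : i ≤ j) (hj : j ≤ n / 2) :
    n.choose i ≤ n.choose j := by
  induction j, hij using Nat.le_induction with
  | base => rfl
  | succ j _ ih => exact (ih (by omega)).trans (choose_le_succ_of_lt_half_left (by omega))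

theorem choose_le_choose_right_of_le_of_add_le {n i j : ℕ} (hij : i ≤ j) (hn : i + j ≤ n) :
    n.choose i ≤ n.choose j := by
  rcases le_or_gt j (n / 2) with hj | hj
  · exact choose_le_choose_right_of_le_half hij hj
  · rw [← choose_symm (by omega : j ≤ n)]
    exact choose_le_choose_right_of_le_half (by omega) (by omega)

theorem sum_choose_mul_le_add_choose (a b : ℕ) {r : ℕ} {S : Finset (ℕ × ℕ)}
    (hS : S ⊆ antidiagonal r) : ∑ p ∈ S, a.choose p.1 * b.choose p.2 ≤ (a + b).choose r :=
  add_choose_eq a b r ▸ sum_le_sum_of_subset hS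

theorem choose_two_lt_add_mul_choose_two {r a : ℕ} (hr : 3 ≤ r) (ha : r - 1 ≤ a) :
    r.choose 2 < a + (r - 1) * a.choose 2 := by
  have hpascal : r.choose 2 = (r - 1) + (r - 1).choose 2 := by
    obtain ⟨q, rfl⟩ : ∃ q, r = q + 1 := ⟨r - 1, by omega⟩
    simp [choose_succ_succ']
  have hmono : (r - 1).choose 2 ≤ a.choose 2 := choose_le_choose 2 ha
  have hpos : 0 < a.choose 2 := choose_pos (by omega)
  have hmul : 2 * a.choose 2 ≤ (r - 1) * a.choose 2 := Nat.mul_le_mul_right _ (by omega)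
  omega

end Nat

open Nat

theorem add_choose_three_terms_le {a b r : ℕ} (hr : 4 ≤ r) :
    a * b.choose (r - 1) + a.choose (r - 1) * b + a.choose 2 * b.choose (r - 2) ≤
      (a + b).choose r := by
  have h := sum_choose_mul_le_add_choose a b
    (S := {(1, r - 1), (r - 1, 1), (2, r - 2)}) (r := r) (by
      intro p hp
      simp only [mem_insert, mem_singleton] at hp
      rcases hp with rfl | rfl | rfl <;> simp <;> omega)
  rw [sum_insert (by simp; omega), sum_insert (by simp; omega), sum_singleton] at h
  simpa only [choose_one_right, add_assoc] using h

theorem add_choose_three_terms_le_of_three {a b : ℕ} :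
    a * b.choose 2 + a.choose 2 * b + b.choose 3 ≤ (a + b).choose 3 := by
  have h := sum_choose_mul_le_add_choose a b
    (S := {(1, 2), (2, 1), (0, 3)}) (r := 3) (by decide)
  rw [sum_insert (by decide), sum_insert (by decide), sum_singleton] at h
  simpa only [choose_one_right, choose_zero_right, one_mul, add_assoc] using h

theorem sub_one_mul_half_add_choose_two_lt {n r : ℕ} (hr : 3 ≤ r) (hn : r + 3 ≤ n) :
    (n - 1) * (n / 2) + r.choose 2 < n.choose r := by
  have h3r : n.choose 3 ≤ n.choose r := choose_le_choose_right_of_le_of_add_le hr (by omega)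
  have hr2 : r.choose 2 ≤ (n - 3).choose 2 := choose_le_choose 2 (by omega)
  obtain ⟨m, rfl⟩ : ∃ m, n = m + 6 := ⟨n - 6, by omega⟩
  have h6 : 6 * (m + 6).choose 3 = (m + 6) * (m + 5) * (m + 4) := by
    have h := (m + 6).descFactorial_eq_factorial_mul_choose 3
    change (m + 4) * ((m + 5) * ((m + 6) * 1)) = 6 * _ at h
    linarith
  have h2 : 2 * (m + 3).choose 2 = (m + 3) * (m + 2) := by
    have h := (m + 3).descFactorial_eq_factorial_mul_choose 2
    change (m + 2) * ((m + 3) * 1) = 2 * _ at h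
    linarith
  have hhalf : 2 * ((m + 6) / 2) ≤ m + 6 := Nat.mul_div_le _ 2
  have : (m + 5) * ((m + 6) / 2) + (m + 3).choose 2 < (m + 6).choose 3 := by nlinarith
  simp only [show m + 6 - 1 = m + 5 by omega, show m + 6 - 3 = m + 3 by omega] at hr2 ⊢
  omega

theorem sub_one_mul_choose_add_choose_two_lt {a b r : ℕ} (hr : 3 ≤ r) (ha : 3 ≤ a) (hab : a ≤ b)
    (hchoose : a ≤ a.choose (r - 1)) :
    (a + b - 1) * a.choose (r - 1) + r.choose 2 < (a + b).choose r := by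
  have hra : r - 1 ≤ a := by
    by_contra! h
    rw [choose_eq_zero_of_lt h] at hchoose
    omega
  have hsplit : (a + b - 1) * a.choose (r - 1) + a.choose (r - 1) =
      a * a.choose (r - 1) + a.choose (r - 1) * b := by
    rw [← add_one_mul, Nat.sub_add_cancel (by omega : 1 ≤ a + b)]
    ring
  have hY : a * a.choose (r - 1) ≤ a * b.choose (r - 1) :=
    Nat.mul_le_mul_left a (choose_le_choose _ hab)
  rcases (show r = 3 ∨ 4 ≤ r by omega) with rfl | hr4
  · have hv := add_choose_three_terms_le_of_three (a := a) (b := b)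
    have hb3 : 0 < b.choose 3 := choose_pos (by omega)
    have ha2 : 3 ≤ a.choose 2 := choose_le_choose 2 ha
    simp only [show 3 - 1 = 2 from rfl, show choose 3 2 = 3 from rfl] at hsplit hY ⊢
    omega
  · have hv := add_choose_three_terms_le (a := a) (b := b) hr4
    have hrb : r - 1 ≤ b.choose (r - 2) := by
      calc r - 1 = (r - 1).choose (r - 2) := by
            rw [show r - 1 = r - 2 + 1 by omega, choose_succ_self_right]
        _ ≤ b.choose (r - 2) := choose_le_choose _ (by omega)
    have hcrux := choose_two_lt_add_mul_choose_two hr hra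
    have : (r - 1) * a.choose 2 ≤ a.choose 2 * b.choose (r - 2) := by
      rw [mul_comm]; exact Nat.mul_le_mul_left _ hrb
    omega

theorem sub_one_mul_max_add_choose_two_lt {n r : ℕ} (hr : 3 ≤ r) (hn : r + 3 ≤ n) :
    (n - 1) * max (n / 2) ((n / 2).choose (r - 1)) + r.choose 2 < n.choose r := by
  rcases le_total ((n / 2).choose (r - 1)) (n / 2) with h | h
  · rw [max_eq_left h]
    exact sub_one_mul_half_add_choose_two_lt hr hn
  · rw [max_eq_right h]
    have := sub_one_mul_choose_add_choose_two_lt hr (by omega) (by omega : n / 2 ≤ n - n / 2) h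
    rwa [show n / 2 + (n - n / 2) = n by omega] at this

theorem stmt_2_general (r k t s : ℕ) (hr : 3 ≤ r) (hk : r + 4 ≤ k)
    (ht : t = (k - 1) / 2) (hs1 : k - t ≤ s) :
    ((k - 2) * max (k - s) ((k - s).choose (r - 1)) : ℤ) <
      (k - 1).choose r - r.choose 2 := by
  have hm : k - s ≤ (k - 1) / 2 := by omega
  have hmax : max (k - s) ((k - s).choose (r - 1)) ≤
      max ((k - 1) / 2) (((k - 1) / 2).choose (r - 1)) :=
    max_le_max hm (choose_le_choose _ hm)
  have hmain := sub_one_mul_max_add_choose_two_lt (n := k - 1) hr (by omega)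
  have hk2 : ((k : ℤ) - 2) = ((k - 1 - 1 : ℕ) : ℤ) := by omega
  rw [hk2, lt_sub_iff_add_lt]
  exact_mod_cast (Nat.add_le_add_right (Nat.mul_le_mul_left _ hmax) _).trans_lt hmain

theorem stmt_2 (r k t s : ℕ) (hr : 3 ≤ r) (hk : r + 4 ≤ k)
    (ht : t = (k - 1) / 2) (hs1 : k - t ≤ s) (hs2 : s ≤ k - 2) :
    ((k - 2) * max (k - s) ((k - s).choose (r - 1)) : ℤ) <
      (k - 1).choose r - r.choose 2 :=
  stmt_2_general r k t s hr hk ht hs1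
end

section
/- Define f_r(n,k) = p·C(k-1, r) + (m-1) if 1 ≤ m ≤ r, and f_r(n,k) = p·C(k-1, r) + C(m, r) if r+1 ≤ m ≤ k-2, where n = (k-2)p + m with 1 ≤ m ≤ k-2 and p = ⌊(n-1)/(k-2)⌋. Then for all integers n₁, n₂ ≥ 2 and k ≥ r+4, r ≥ 3: f_r(n₁, k) + f_r(n₂, k) ≤ f_r(n₁ + n₂ - 1, k). -/
/-- `f_r(n,k)` with `n = (k-2)·⌊(n-1)/(k-2)⌋ + m`, `1 ≤ m ≤ k-2`:
equals `⌊(n-1)/(k-2)⌋·C(k-1,r) + (m-1)` if `m ≤ r`, and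
`⌊(n-1)/(k-2)⌋·C(k-1,r) + C(m,r)` if `m ≥ r+1`.  (Gives `f_r(1,k) = 0`.) -/
def fEG (r n k : ℕ) : ℕ :=
  (n - 1) / (k - 2) * (k - 1).choose r +
    (let m := n - (k - 2) * ((n - 1) / (k - 2));
     if m ≤ r then m - 1 else m.choose r)

namespace StmtAux3

/-- adding t to the top of a binomial coefficient gains at least t. -/
lemma incr (r : ℕ) (hr : 1 ≤ r) : ∀ t x, r ≤ x + 1 → x.choose r + t ≤ (x + t).choose r := by
  obtain ⟨r', rfl⟩ : ∃ r', r = r' + 1 := ⟨r - 1, by omega⟩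
  intro t
  induction t with
  | zero => intro x _; simp
  | succ t ih =>
    intro x hx
    have h1 := ih x hx
    have h2 : (x + t + 1).choose (r' + 1) = (x + t).choose r' + (x + t).choose (r' + 1) :=
      Nat.choose_succ_succ (x + t) r'
    have h3 : 0 < (x + t).choose r' := Nat.choose_pos (by omega)
    have : x + (t + 1) = x + t + 1 := by omega
    rw [this, h2]
    omega

lemma ge_self (r m : ℕ) (hr : 1 ≤ r) (hm : r + 1 ≤ m) : m ≤ m.choose r := by
  have h := incr r hr (m - (r + 1)) (r + 1) (by omega)
  rw [Nat.choose_succ_self_right] at h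
  have he : r + 1 + (m - (r + 1)) = m := by omega
  rw [he] at h
  omega

lemma step (r a b : ℕ) (hr : 1 ≤ r) (ha : 1 ≤ a) (hab : a ≤ b + 1) :
    a.choose r + b.choose r ≤ (a - 1).choose r + (b + 1).choose r := by
  obtain ⟨r', rfl⟩ : ∃ r', r = r' + 1 := ⟨r - 1, by omega⟩
  obtain ⟨a', rfl⟩ : ∃ a', a = a' + 1 := ⟨a - 1, by omega⟩
  have h1 : (a' + 1).choose (r' + 1) = a'.choose r' + a'.choose (r' + 1) :=
    Nat.choose_succ_succ a' r'
  have h2 : (b + 1).choose (r' + 1) = b.choose r' + b.choose (r' + 1) :=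
    Nat.choose_succ_succ b r'
  have h3 : a'.choose r' ≤ b.choose r' := Nat.choose_le_choose r' (by omega)
  simp only [Nat.add_sub_cancel]
  omega

lemma conv (r : ℕ) (hr : 1 ≤ r) :
    ∀ t a b, a ≤ b + 1 → t ≤ a →
      a.choose r + b.choose r ≤ (a - t).choose r + (b + t).choose r := by
  intro t
  induction t with
  | zero => intro a b _ _; simp
  | succ t ih =>
    intro a b hab hta
    have h1 := step r a b hr (by omega) hab
    have h2 := ih (a - 1) (b + 1) (by omega) (by omega)
    have e1 : a - 1 - t = a - (t + 1) := by omega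
    have e2 : b + 1 + t = b + (t + 1) := by omega
    rw [e1, e2] at h2
    omega

/-- The "remainder" part of fEG. -/
def G (r m : ℕ) : ℕ := if m ≤ r then m - 1 else m.choose r

lemma choose_le_G (r m : ℕ) (hr : 3 ≤ r) : m.choose r ≤ G r m := by
  unfold G
  split
  · rename_i h
    rcases lt_or_eq_of_le h with h' | h'
    · rw [Nat.choose_eq_zero_of_lt h']; omega
    · subst h'; rw [Nat.choose_self]; omega
  · exact le_refl _

lemma G_one (r : ℕ) (hr : 3 ≤ r) : G r 1 = 0 := by unfold G; simp [show (1:ℕ) ≤ r by omega]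

/-- superadditivity of G, assuming a ≤ b. -/
lemma G_super_le (r a b : ℕ) (hr : 3 ≤ r) (ha : 1 ≤ a) (hab : a ≤ b) :
    G r a + G r b ≤ G r (a + b - 1) := by
  unfold G
  by_cases hbr : b ≤ r
  · by_cases hs : a + b - 1 ≤ r
    · simp only [if_pos (by omega : a ≤ r), if_pos hbr, if_pos hs]
      omega
    · simp only [if_pos (by omega : a ≤ r), if_pos hbr, if_neg hs]
      have := ge_self r (a + b - 1) (by omega) (by omega)
      omega
  · by_cases har : a ≤ r
    · simp only [if_pos har, if_neg hbr, if_neg (by omega : ¬ a + b - 1 ≤ r)]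
      have h := incr r (by omega) (a - 1) b (by omega)
      have he : b + (a - 1) = a + b - 1 := by omega
      rw [he] at h
      omega
    · simp only [if_neg har, if_neg hbr, if_neg (by omega : ¬ a + b - 1 ≤ r)]
      have h1 := conv r (by omega) (a - r) a b (by omega) (by omega)
      have e1 : a - (a - r) = r := by omega
      have e2 : b + (a - r) = a + b - r := by omega
      rw [e1, e2, Nat.choose_self] at h1
      have h2 := incr r (by omega) (r - 1) (a + b - r) (by omega)
      have e3 : a + b - r + (r - 1) = a + b - 1 := by omega
      rw [e3] at h2
      omega

lemma G_super (r a b : ℕ) (hr : 3 ≤ r) (ha : 1 ≤ a) (hb : 1 ≤ b) :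
    G r a + G r b ≤ G r (a + b - 1) := by
  rcases le_total a b with h | h
  · exact G_super_le r a b hr ha h
  · have := G_super_le r b a hr hb h
    have e : b + a - 1 = a + b - 1 := by omega
    rw [e] at this
    omega

/-- overflow case, assuming a ≤ b. -/
lemma G_over_le (r d a b : ℕ) (hr : 3 ≤ r) (hd : r + 2 ≤ d) (ha : 1 ≤ a)
    (had : a ≤ d) (hb : a ≤ b) (hbd : b ≤ d) (hover : d + 2 ≤ a + b) :
    G r a + G r b ≤ (d + 1).choose r + G r (a + b - 1 - d) := by
  have hc1 : 1 ≤ a + b - 1 - d := by omega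
  by_cases hbr : b ≤ r
  · unfold G
    simp only [if_pos (by omega : a ≤ r), if_pos hbr,
      if_pos (by omega : a + b - 1 - d ≤ r)]
    have := ge_self r (d + 1) (by omega) (by omega)
    omega
  · by_cases har : a ≤ r
    · unfold G
      simp only [if_pos har, if_neg hbr,
        if_pos (by omega : a + b - 1 - d ≤ r)]
      have h := incr r (by omega) (d + 1 - b) b (by omega)
      have he : b + (d + 1 - b) = d + 1 := by omega
      rw [he] at h
      omega
    · have hGa : G r a = a.choose r := by unfold G; rw [if_neg har]
      have hGb : G r b = b.choose r := by unfold G; rw [if_neg hbr]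
      rw [hGa, hGb]
      set c := a + b - 1 - d with hc
      have h1 := conv r (by omega) (a - c) a b (by omega) (by omega)
      have e1 : a - (a - c) = c := by omega
      have e2 : b + (a - c) = d + 1 := by omega
      rw [e1, e2] at h1
      have h2 := choose_le_G r c hr
      omega

lemma G_over (r d a b : ℕ) (hr : 3 ≤ r) (hd : r + 2 ≤ d) (ha : 1 ≤ a) (hb : 1 ≤ b)
    (had : a ≤ d) (hbd : b ≤ d) (hover : d + 2 ≤ a + b) :
    G r a + G r b ≤ (d + 1).choose r + G r (a + b - 1 - d) := by
  rcases le_total a b with h | h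
  · exact G_over_le r d a b hr hd ha had h hbd hover
  · have := G_over_le r d b a hr hd hb hbd h had (by omega)
    have e : b + a - 1 - d = a + b - 1 - d := by omega
    rw [e] at this
    omega

lemma fEG_eq (r n k : ℕ) (hn : 1 ≤ n) (hk : 3 ≤ k) :
    fEG r n k = (n - 1) / (k - 2) * (k - 1).choose r + G r ((n - 1) % (k - 2) + 1) := by
  unfold fEG G
  have hd : 0 < k - 2 := by omega
  have hdm := Nat.div_add_mod (n - 1) (k - 2)
  have hm : n - (k - 2) * ((n - 1) / (k - 2)) = (n - 1) % (k - 2) + 1 := by omega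
  simp only [hm]

end StmtAux3

open StmtAux3 in
theorem stmt_3 (r k n₁ n₂ : ℕ) (hr : 3 ≤ r) (hk : r + 4 ≤ k)
    (h1 : 2 ≤ n₁) (h2 : 2 ≤ n₂) :
    fEG r n₁ k + fEG r n₂ k ≤ fEG r (n₁ + n₂ - 1) k := by
  have hk3 : 3 ≤ k := by omega
  set d := k - 2 with hdk
  have hd : r + 2 ≤ d := by omega
  have hd0 : 0 < d := by omega
  set q₁ := (n₁ - 1) / d with hq1
  set s₁ := (n₁ - 1) % d with hs1
  set q₂ := (n₂ - 1) / d with hq2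
  set s₂ := (n₂ - 1) % d with hs2
  have e₁ : n₁ - 1 = d * q₁ + s₁ := (Nat.div_add_mod (n₁ - 1) d).symm
  have e₂ : n₂ - 1 = d * q₂ + s₂ := (Nat.div_add_mod (n₂ - 1) d).symm
  have hs₁d : s₁ < d := Nat.mod_lt _ hd0
  have hs₂d : s₂ < d := Nat.mod_lt _ hd0
  rw [fEG_eq r n₁ k (by omega) hk3, fEG_eq r n₂ k (by omega) hk3,
    fEG_eq r (n₁ + n₂ - 1) k (by omega) hk3]
  rw [← hdk, ← hq1, ← hs1, ← hq2, ← hs2]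
  have hkd : k - 1 = d + 1 := by omega
  by_cases hcase : s₁ + s₂ < d
  · have eN : n₁ + n₂ - 1 - 1 = s₁ + s₂ + d * (q₁ + q₂) := by
      have : d * (q₁ + q₂) = d * q₁ + d * q₂ := by ring
      omega
    have hq : (n₁ + n₂ - 1 - 1) / d = q₁ + q₂ := by
      rw [eN, Nat.add_mul_div_left _ _ hd0, Nat.div_eq_of_lt hcase, Nat.zero_add]
    have hs : (n₁ + n₂ - 1 - 1) % d = s₁ + s₂ := by
      rw [eN, Nat.add_mul_mod_self_left, Nat.mod_eq_of_lt hcase]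
    rw [hq, hs]
    have hG := G_super r (s₁ + 1) (s₂ + 1) hr (by omega) (by omega)
    have eG : s₁ + 1 + (s₂ + 1) - 1 = s₁ + s₂ + 1 := by omega
    rw [eG] at hG
    have : (q₁ + q₂) * (k - 1).choose r = q₁ * (k - 1).choose r + q₂ * (k - 1).choose r :=
      by ring
    omega
  · have eN : n₁ + n₂ - 1 - 1 = (s₁ + s₂ - d) + d * (q₁ + q₂ + 1) := by
      have : d * (q₁ + q₂ + 1) = d * q₁ + d * q₂ + d := by ring
      omega
    have hlt : s₁ + s₂ - d < d := by omega
    have hq : (n₁ + n₂ - 1 - 1) / d = q₁ + q₂ + 1 := by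
      rw [eN, Nat.add_mul_div_left _ _ hd0, Nat.div_eq_of_lt hlt, Nat.zero_add]
    have hs : (n₁ + n₂ - 1 - 1) % d = s₁ + s₂ - d := by
      rw [eN, Nat.add_mul_mod_self_left, Nat.mod_eq_of_lt hlt]
    rw [hq, hs]
    have hG := G_over r d (s₁ + 1) (s₂ + 1) hr hd (by omega) (by omega)
      (by omega) (by omega) (by omega)
    have eG : s₁ + 1 + (s₂ + 1) - 1 - d = s₁ + s₂ - d + 1 := by omega
    rw [eG] at hG
    rw [hkd]
    have : (q₁ + q₂ + 1) * (d + 1).choose r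
        = q₁ * (d + 1).choose r + q₂ * (d + 1).choose r + (d + 1).choose r := by ring
    omega
end

section
/- Define f⁺_r(n,k) = p·C(k-1,r) + C(m,2) if 1 ≤ m ≤ r+1, and f⁺_r(n,k) = p·C(k-1,r) + C(m,r) if r+2 ≤ m ≤ k-2, where n = (k-2)p + m, 1 ≤ m ≤ k-2, p = ⌊(n-1)/(k-2)⌋. Then for all n₁, n₂ ≥ 2, r ≥ 3, k ≥ r+4: f⁺_r(n₁,k) + f⁺_r(n₂,k) ≤ f⁺_r(n₁+n₂-1, k). -/
/-- `f⁺_r(n,k) = ⌊(n-1)/(k-2)⌋·C(k-1,r) + max(C(m,2), C(m,r))` where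
`n = (k-2)·⌊(n-1)/(k-2)⌋ + m`, `1 ≤ m ≤ k-2`.  (Gives `f⁺_r(1,k) = 0`.) -/
def fEGplus (r n k : ℕ) : ℕ :=
  (n - 1) / (k - 2) * (k - 1).choose r +
    (let m := n - (k - 2) * ((n - 1) / (k - 2));
     max (m.choose 2) (m.choose r))

/-- auxiliary: the "max of binomials" function. -/
def gM (r m : ℕ) : ℕ := max (m.choose 2) (m.choose r)

lemma choose_mid (n j : ℕ) : 2 * (n + 1).choose j ≤ n.choose j + (n + 2).choose j := by
  cases j with
  | zero => simp
  | succ j =>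
    have h1 : (n + 1).choose (j + 1) = n.choose j + n.choose (j + 1) :=
      Nat.choose_succ_succ n j
    have h2 : (n + 2).choose (j + 1) = (n + 1).choose j + (n + 1).choose (j + 1) :=
      Nat.choose_succ_succ (n + 1) j
    have h3 : n.choose j ≤ (n + 1).choose j := Nat.choose_le_choose j (by omega)
    omega

lemma gM_mid (r n : ℕ) : 2 * gM r (n + 1) ≤ gM r n + gM r (n + 2) := by
  have h2 := choose_mid n 2
  have hr := choose_mid n r
  have a1 : n.choose 2 ≤ gM r n := le_max_left _ _
  have a2 : n.choose r ≤ gM r n := le_max_right _ _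
  have b1 : (n + 2).choose 2 ≤ gM r (n + 2) := le_max_left _ _
  have b2 : (n + 2).choose r ≤ gM r (n + 2) := le_max_right _ _
  rcases le_total ((n + 1).choose 2) ((n + 1).choose r) with h | h
  · rw [gM, max_eq_right h]; omega
  · rw [gM, max_eq_left h]; omega

lemma gM_step (r : ℕ) : ∀ a b : ℕ, a ≤ b → gM r (a + 1) + gM r b ≤ gM r a + gM r (b + 1) := by
  intro a b hab
  induction b, hab using Nat.le_induction with
  | base => omega
  | succ b hb ih =>
    have h := gM_mid r b
    have e : gM r (b + 1 + 1) = gM r (b + 2) := rfl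
    omega

lemma gM_transfer (r : ℕ) : ∀ t u b : ℕ, u + t ≤ b + 1 →
    gM r (u + t) + gM r b ≤ gM r u + gM r (b + t) := by
  intro t
  induction t with
  | zero => intro u b _; simp
  | succ t ih =>
    intro u b h
    have h1 : gM r (u + t + 1) + gM r b ≤ gM r (u + t) + gM r (b + 1) :=
      gM_step r (u + t) b (by omega)
    have h2 := ih u (b + 1) (by omega)
    have e1 : gM r (u + (t + 1)) = gM r (u + t + 1) := rfl
    have e2 : gM r (b + (t + 1)) = gM r (b + 1 + t) := by
      rw [show b + (t + 1) = b + 1 + t from by omega]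
    omega

lemma gM_one (r : ℕ) (hr : 3 ≤ r) : gM r 1 = 0 := by
  rw [gM, Nat.choose_eq_zero_of_lt (by omega), Nat.choose_eq_zero_of_lt (by omega)]
  simp

/-- superadditivity: `g(a+1) + g(b+1) ≤ g(a+b+1)`. -/
lemma gM_super (r : ℕ) (hr : 3 ≤ r) : ∀ a b : ℕ, gM r (a + 1) + gM r (b + 1) ≤ gM r (a + b + 1) := by
  intro a
  induction a with
  | zero =>
    intro b
    have e : gM r (0 + b + 1) = gM r (b + 1) := by rw [Nat.zero_add]
    have e2 : gM r (0 + 1) = gM r 1 := by rw [Nat.zero_add]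
    have h0 := gM_one r hr
    omega
  | succ a ih =>
    intro b
    have h1 := ih b
    have h2 : gM r (a + 1 + 1) + gM r (a + b + 1) ≤ gM r (a + 1) + gM r (a + b + 1 + 1) :=
      gM_step r (a + 1) (a + b + 1) (by omega)
    have e : gM r (a + 1 + b + 1) = gM r (a + b + 1 + 1) := by
      rw [show a + 1 + b + 1 = a + b + 1 + 1 from by omega]
    omega

lemma choose_mono_half (n : ℕ) : ∀ i j : ℕ, i ≤ j → j ≤ n / 2 → n.choose i ≤ n.choose j := by
  intro i j hij
  induction j, hij using Nat.le_induction with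
  | base => intro _; exact le_refl _
  | succ j hj ih =>
    intro h
    exact (ih (by omega)).trans (Nat.choose_le_succ_of_lt_half_left (by omega))

lemma choose_two_le (n j : ℕ) (h2 : 2 ≤ j) (hn : j + 2 ≤ n) : n.choose 2 ≤ n.choose j := by
  rcases le_or_gt j (n / 2) with h | h
  · exact choose_mono_half n 2 j h2 h
  · have hs : n.choose j = n.choose (n - j) := (Nat.choose_symm (by omega)).symm
    rw [hs]
    exact choose_mono_half n 2 (n - j) (by omega) (by omega)

lemma gM_top (r n : ℕ) (hr : 3 ≤ r) (hn : r + 2 ≤ n) : gM r n = n.choose r := by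
  rw [gM, max_eq_right (choose_two_le n r (by omega) (by omega))]

lemma fEGplus_eq (r k n : ℕ) (hk : 4 ≤ k) (hn : 1 ≤ n) :
    fEGplus r n k =
      (n - 1) / (k - 2) * (k - 1).choose r + gM r ((n - 1) % (k - 2) + 1) := by
  have hdm := Nat.div_add_mod (n - 1) (k - 2)
  have hle : (k - 2) * ((n - 1) / (k - 2)) ≤ n - 1 := Nat.mul_div_le _ _
  have hm : n - (k - 2) * ((n - 1) / (k - 2)) = (n - 1) % (k - 2) + 1 := by omega
  rw [fEGplus]
  simp only [hm]
  rfl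

theorem stmt_4 (r k n₁ n₂ : ℕ) (hr : 3 ≤ r) (hk : r + 4 ≤ k)
    (h1 : 2 ≤ n₁) (h2 : 2 ≤ n₂) :
    fEGplus r n₁ k + fEGplus r n₂ k ≤ fEGplus r (n₁ + n₂ - 1) k := by
  rw [fEGplus_eq r k n₁ (by omega) (by omega), fEGplus_eq r k n₂ (by omega) (by omega),
      fEGplus_eq r k (n₁ + n₂ - 1) (by omega) (by omega)]
  obtain ⟨K, hKdef⟩ : ∃ K, K = k - 2 := ⟨_, rfl⟩
  rw [← hKdef]
  have hKr : r + 2 ≤ K := by omega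
  have hKpos : 0 < K := by omega
  obtain ⟨p₁, s₁, hq1, hr1, hd1, hs1⟩ :
      ∃ p s, (n₁ - 1) / K = p ∧ (n₁ - 1) % K = s ∧ K * p + s = n₁ - 1 ∧ s < K :=
    ⟨_, _, rfl, rfl, Nat.div_add_mod _ _, Nat.mod_lt _ hKpos⟩
  obtain ⟨p₂, s₂, hq2, hr2, hd2, hs2⟩ :
      ∃ p s, (n₂ - 1) / K = p ∧ (n₂ - 1) % K = s ∧ K * p + s = n₂ - 1 ∧ s < K :=
    ⟨_, _, rfl, rfl, Nat.div_add_mod _ _, Nat.mod_lt _ hKpos⟩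
  rw [hq1, hr1, hq2, hr2]
  have hm : K * (p₁ + p₂) = K * p₁ + K * p₂ := by ring
  have hNe : n₁ + n₂ - 1 - 1 = K * (p₁ + p₂) + (s₁ + s₂) := by omega
  rw [hNe, Nat.mul_add_div hKpos, Nat.mul_add_mod]
  rcases lt_or_ge (s₁ + s₂) K with hcase | hcase
  · -- no wrap
    rw [Nat.div_eq_of_lt hcase, Nat.mod_eq_of_lt hcase]
    have hsup := gM_super r hr s₁ s₂
    have he : (p₁ + p₂ + 0) * (k - 1).choose r =
        p₁ * (k - 1).choose r + p₂ * (k - 1).choose r := by ring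
    linarith
  · -- wrap
    have hu : s₁ + s₂ = K * 1 + (s₁ + s₂ - K) := by omega
    rw [hu, Nat.mul_add_div hKpos, Nat.mul_add_mod,
        Nat.div_eq_of_lt (show s₁ + s₂ - K < K from by omega),
        Nat.mod_eq_of_lt (show s₁ + s₂ - K < K from by omega)]
    have hwrap : gM r (s₁ + 1) + gM r (s₂ + 1) ≤ gM r (s₁ + s₂ - K + 1) + gM r (K + 1) := by
      rcases le_total s₁ s₂ with hab | hab
      · have e1 : s₁ + 1 = s₁ + s₂ - K + 1 + (K - s₂) := by omega
        have e2 : K + 1 = s₂ + 1 + (K - s₂) := by omega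
        rw [e1, e2]
        exact gM_transfer r (K - s₂) (s₁ + s₂ - K + 1) (s₂ + 1) (by omega)
      · have e1 : s₂ + 1 = s₁ + s₂ - K + 1 + (K - s₁) := by omega
        have e2 : K + 1 = s₁ + 1 + (K - s₁) := by omega
        rw [e1, e2]
        have := gM_transfer r (K - s₁) (s₁ + s₂ - K + 1) (s₁ + 1) (by omega)
        omega
    have htop : gM r (K + 1) = (k - 1).choose r := by
      rw [gM_top r (K + 1) hr (by omega), show K + 1 = k - 1 from by omega]
    rw [htop] at hwrap
    have he : (p₁ + p₂ + (1 + 0)) * (k - 1).choose r =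
        p₁ * (k - 1).choose r + p₂ * (k - 1).choose r + (k - 1).choose r := by ring
    linarith
end

section
/- Let r ≥ 2, w ≥ 2, and let H be an r-uniform hypergraph on a vertex set of size w. Let ∂₂H denote the set of 2-element subsets contained in some edge of H, and let its complement (within all 2-subsets of the vertex set) have size c. Then |H| + c ≤ C(w,2) if 2 ≤ w ≤ r+2, and |H| + c ≤ C(w,r) if w ≥ r+2. -/
/-!
Let `P` be the uncovered pairs. The covered pairs `∂^[r-2] H` and `P` are disjoint families of
2-sets, and the `r`-sets containing an uncovered pair, `∂⁺^[r-2] P`, are disjoint from `H`. By the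
iterated local LYM inequality a uniform family fills no larger a fraction of its layer than its
iterated (upper) shadow fills of its own, so `|H| ≤ |∂^[r-2] H|` when `C(w,r) ≤ C(w,2)`, i.e.
`w ≤ r + 2`, and `|P| ≤ |∂⁺^[r-2] P|` when `C(w,2) ≤ C(w,r)`, i.e. `w ≥ r + 2`.
-/

open Finset FinsetFamily

namespace Nat

theorem choose_le_choose_of_le_half {n a b : ℕ} (hab : a ≤ b) (hb : b ≤ n / 2) :
    n.choose a ≤ n.choose b := by
  induction b, hab using Nat.le_induction with
  | base => rfl
  | succ b _ ih => exact (ih (by omega)).trans (choose_le_succ_of_lt_half_left (by omega))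

theorem choose_le_choose_of_le_of_add_le {n a b : ℕ} (hab : a ≤ b) (habn : a + b ≤ n) :
    n.choose a ≤ n.choose b := by
  rcases le_or_gt b (n / 2) with hb | hb
  · exact choose_le_choose_of_le_half hab hb
  · rw [← choose_symm (by omega : b ≤ n)]
    exact choose_le_choose_of_le_half (by omega) (by omega)

end Nat

namespace Finset

variable {α : Type*} [DecidableEq α] [Fintype α] {𝒜 ℬ : Finset (Finset α)} {k j : ℕ}

theorem shadow_iterate_compls (j : ℕ) : ∂^[j] 𝒜ᶜˢ = (∂⁺^[j] 𝒜)ᶜˢ := by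
  induction j with
  | zero => rfl
  | succ j ih => rw [Function.iterate_succ_apply', Function.iterate_succ_apply', ih, shadow_compls]

theorem _root_.Set.Sized.upShadow_iterate (h𝒜 : (𝒜 : Set (Finset α)).Sized k) :
    (∂⁺^[j] 𝒜 : Set (Finset α)).Sized (k + j) := by
  induction j with
  | zero => exact h𝒜
  | succ j ih => rw [Function.iterate_succ_apply']; exact ih.upShadow

theorem local_lubell_yamamoto_meshalkin_inequality_div_iterate {𝕜 : Type*} [Semifield 𝕜]
    [LinearOrder 𝕜] [IsStrictOrderedRing 𝕜] (h𝒜 : (𝒜 : Set (Finset α)).Sized k) (hj : j ≤ k) :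
    (#𝒜 : 𝕜) / (Fintype.card α).choose k ≤ #(∂^[j] 𝒜) / (Fintype.card α).choose (k - j) := by
  induction j with
  | zero => rfl
  | succ j ih =>
    refine (ih (by omega)).trans ?_
    rw [Function.iterate_succ_apply', ← Nat.sub_sub]
    exact local_lubell_yamamoto_meshalkin_inequality_div (by omega) h𝒜.shadow_iterate

theorem card_le_card_shadow_iterate (h𝒜 : (𝒜 : Set (Finset α)).Sized k) (hj : j ≤ k)
    (hchoose : (Fintype.card α).choose k ≤ (Fintype.card α).choose (k - j)) :
    #𝒜 ≤ #(∂^[j] 𝒜) := by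
  obtain rfl | ⟨s, hs⟩ := 𝒜.eq_empty_or_nonempty
  · simp
  have hk : k ≤ Fintype.card α := h𝒜 hs ▸ card_le_univ s
  have hpos : 0 < (Fintype.card α).choose (k - j) := Nat.choose_pos (by omega)
  have hLYM : #𝒜 * (Fintype.card α).choose (k - j) ≤ #(∂^[j] 𝒜) * (Fintype.card α).choose k := by
    have := local_lubell_yamamoto_meshalkin_inequality_div_iterate (𝕜 := ℚ) h𝒜 hj
    rw [div_le_div_iff₀ (by exact_mod_cast Nat.choose_pos hk) (by exact_mod_cast hpos)] at this
    exact_mod_cast this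
  exact Nat.le_of_mul_le_mul_right (hLYM.trans (Nat.mul_le_mul_left _ hchoose)) hpos

theorem card_le_card_upShadow_iterate (h𝒜 : (𝒜 : Set (Finset α)).Sized k)
    (hj : k + j ≤ Fintype.card α)
    (hchoose : (Fintype.card α).choose k ≤ (Fintype.card α).choose (k + j)) :
    #𝒜 ≤ #(∂⁺^[j] 𝒜) := by
  have hchoose' : (Fintype.card α).choose (Fintype.card α - k)
      ≤ (Fintype.card α).choose (Fintype.card α - k - j) := by
    rwa [Nat.choose_symm (by omega), Nat.sub_sub, Nat.choose_symm (by omega)]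
  simpa only [card_compls, shadow_iterate_compls] using
    card_le_card_shadow_iterate h𝒜.compls (by omega) hchoose'

omit [Fintype α] in
theorem disjoint_shadow_iterate_of_forall_not_subset (h : ∀ s ∈ ℬ, ∀ t ∈ 𝒜, ¬ s ⊆ t) :
    Disjoint (∂^[j] 𝒜) ℬ := by
  refine disjoint_left.2 fun s hs hsℬ ↦ ?_
  obtain ⟨t, ht, hst, -⟩ := mem_shadow_iterate_iff_exists_mem_card_add.1 hs
  exact h s hsℬ t ht hst

theorem disjoint_upShadow_iterate_of_forall_not_subset (h : ∀ s ∈ ℬ, ∀ t ∈ 𝒜, ¬ s ⊆ t) :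
    Disjoint 𝒜 (∂⁺^[j] ℬ) := by
  refine disjoint_right.2 fun t ht ht𝒜 ↦ ?_
  obtain ⟨s, hs, hst, -⟩ := mem_upShadow_iterate_iff_exists_mem_card_add.1 ht
  exact h s hs t ht𝒜 hst

theorem card_add_card_le_choose_of_disjoint (h𝒜 : (𝒜 : Set (Finset α)).Sized k)
    (hℬ : (ℬ : Set (Finset α)).Sized k) (hdisj : Disjoint 𝒜 ℬ) :
    #𝒜 + #ℬ ≤ (Fintype.card α).choose k := by
  rw [← card_union_of_disjoint hdisj]
  exact Set.Sized.card_le (by simpa using Set.sized_union.2 ⟨h𝒜, hℬ⟩)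

end Finset

theorem stmt_5_general {V : Type*} [Fintype V] [DecidableEq V] (r w : ℕ)
    (hr : 2 ≤ r) (hV : Fintype.card V = w)
    (H : Finset (Finset V)) (hH : ∀ e ∈ H, e.card = r)
    (c : ℕ)
    (hc : c = ((Finset.univ.powersetCard 2 : Finset (Finset V)).filter
        (fun p => ∀ e ∈ H, ¬ p ⊆ e)).card) :
    (w ≤ r + 2 → H.card + c ≤ w.choose 2) ∧
    (r + 2 ≤ w → H.card + c ≤ w.choose r) := by
  subst hV hc
  set P := (univ.powersetCard 2 : Finset (Finset V)).filter fun p => ∀ e ∈ H, ¬ p ⊆ e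
  have hHsized : (H : Set (Finset V)).Sized r := hH
  have hPsized : (P : Set (Finset V)).Sized 2 := fun p hp ↦
    (mem_powersetCard.1 (mem_filter.1 hp).1).2
  have hPH : ∀ p ∈ P, ∀ e ∈ H, ¬ p ⊆ e := fun p hp ↦ (mem_filter.1 hp).2
  have hr' : r - (r - 2) = 2 := by omega
  have hr'' : 2 + (r - 2) = r := by omega
  refine ⟨fun hwr ↦ ?_, fun hrw ↦ ?_⟩
  · have hchoose : (Fintype.card V).choose r ≤ (Fintype.card V).choose (r - (r - 2)) := by
      rw [hr']
      rcases le_or_gt r (Fintype.card V) with hrV | hrV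
      · rw [← Nat.choose_symm hrV]
        exact Nat.choose_le_choose_of_le_of_add_le (by omega) (by omega)
      · simp [Nat.choose_eq_zero_of_lt hrV]
    have hS : (∂^[r - 2] H : Set (Finset V)).Sized 2 := by
      simpa only [hr'] using hHsized.shadow_iterate (k := r - 2)
    calc #H + #P ≤ #(∂^[r - 2] H) + #P :=
          Nat.add_le_add_right (card_le_card_shadow_iterate hHsized (Nat.sub_le r 2) hchoose) _
      _ ≤ (Fintype.card V).choose 2 := card_add_card_le_choose_of_disjoint hS hPsized
          (disjoint_shadow_iterate_of_forall_not_subset hPH)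
  · have hchoose : (Fintype.card V).choose 2 ≤ (Fintype.card V).choose (2 + (r - 2)) :=
      hr''.symm ▸ Nat.choose_le_choose_of_le_of_add_le hr (by omega)
    have hU : (∂⁺^[r - 2] P : Set (Finset V)).Sized r := by
      simpa only [hr''] using hPsized.upShadow_iterate (j := r - 2)
    calc #H + #P ≤ #H + #(∂⁺^[r - 2] P) :=
          Nat.add_le_add_left (card_le_card_upShadow_iterate hPsized (by omega) hchoose) _
      _ ≤ (Fintype.card V).choose r := card_add_card_le_choose_of_disjoint hHsized hU
          (disjoint_upShadow_iterate_of_forall_not_subset hPH)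

theorem stmt_5 {V : Type*} [Fintype V] [DecidableEq V] (r w : ℕ)
    (hr : 2 ≤ r) (hw : 2 ≤ w) (hV : Fintype.card V = w)
    (H : Finset (Finset V)) (hH : ∀ e ∈ H, e.card = r)
    (c : ℕ)
    (hc : c = ((Finset.univ.powersetCard 2 : Finset (Finset V)).filter
        (fun p => ∀ e ∈ H, ¬ p ⊆ e)).card) :
    (w ≤ r + 2 → H.card + c ≤ w.choose 2) ∧
    (r + 2 ≤ w → H.card + c ≤ w.choose r) :=
  stmt_5_general r w hr hV H hH c hc
end

section
/- Let H be a hypergraph on vertex set V, and let (A, 𝒜) be a system of distinct representative pairs of H of maximum size, where A = {{x₁,y₁},...,{x_s,y_s}} are distinct pairs and 𝒜 = {f₁,...,f_s} are distinct hyperedges with {xᵢ,yᵢ} ⊆ fᵢ and no {xᵢ,yᵢ} contained in any edge of H \ 𝒜. Let ℬ = H \ 𝒜 and B = ∂₂ℬ. Then for every nonempty set S of pairs in B, the number of hyperedges of ℬ containing at least one pair of S is strictly greater than |S|. -/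
/-- A system of distinct representative pairs (SDRP) of a hypergraph `H`:
distinct pairs `{xᵢ, yᵢ}` and distinct hyperedges `fᵢ ∈ H` with
`{xᵢ, yᵢ} ⊆ fᵢ`, such that no pair `{xᵢ, yᵢ}` is contained in any
hyperedge of `H` outside `{f₁, …, f_s}`. -/
structure SDRP (V : Type*) [DecidableEq V] (H : Finset (Finset V)) where
  s : ℕ
  x : Fin s → V
  y : Fin s → V
  f : Fin s → Finset V
  hne : ∀ i, x i ≠ y i
  hpairs : Function.Injective (fun i => ({x i, y i} : Finset V))
  hfinj : Function.Injective f
  hfH : ∀ i, f i ∈ H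
  hsub : ∀ i, ({x i, y i} : Finset V) ⊆ f i
  hnot : ∀ i, ∀ g ∈ H, (∀ j, f j ≠ g) → ¬ ({x i, y i} : Finset V) ⊆ g

private lemma append_inj {α : Type*} {m n : ℕ} {u : Fin m → α} {v : Fin n → α}
    (hu : Function.Injective u) (hv : Function.Injective v)
    (huv : ∀ i j, u i ≠ v j) : Function.Injective (Fin.append u v) := by
  intro i₁ i₂ h
  induction i₁ using Fin.addCases with
  | left i₁ =>
    induction i₂ using Fin.addCases with
    | left i₂ =>
      simp only [Fin.append_left] at h
      exact congrArg _ (hu h)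
    | right i₂ =>
      simp only [Fin.append_left, Fin.append_right] at h
      exact absurd h (huv _ _)
  | right i₁ =>
    induction i₂ using Fin.addCases with
    | left i₂ =>
      simp only [Fin.append_left, Fin.append_right] at h
      exact absurd h.symm (huv _ _)
    | right i₂ =>
      simp only [Fin.append_right] at h
      exact congrArg _ (hv h)

/-- If `E ⊆ ℬ` admits an injective system of pairs `m e ⊆ e` such that every
edge of `ℬ` containing one of these pairs lies in `E`, then by maximality of
the SDRP, `E` must be empty. -/
private lemma no_cover {V : Type*} [Fintype V] [DecidableEq V]
    (H : Finset (Finset V)) (D : SDRP V H)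
    (hmax : ∀ D' : SDRP V H, D'.s ≤ D.s)
    (ℬ : Finset (Finset V)) (hB : ℬ = H \ Finset.univ.image D.f)
    (E : Finset (Finset V)) (hE : E ⊆ ℬ)
    (m : {e // e ∈ E} → Finset V) (hminj : Function.Injective m)
    (hmcard : ∀ e, (m e).card = 2) (hmsub : ∀ e, m e ⊆ e.1)
    (hcover : ∀ g ∈ ℬ, (∃ e, m e ⊆ g) → g ∈ E) : E = ∅ := by
  classical
  by_contra hne
  -- basic facts about ℬ
  have hBH : ∀ g ∈ ℬ, g ∈ H := by
    intro g hg; rw [hB] at hg; exact (Finset.mem_sdiff.mp hg).1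
  have hBf : ∀ g ∈ ℬ, ∀ j, D.f j ≠ g := by
    intro g hg j hj
    rw [hB, Finset.mem_sdiff] at hg
    exact hg.2 (Finset.mem_image.mpr ⟨j, Finset.mem_univ j, hj⟩)
  set k := E.card with hk
  have hkpos : 0 < k := Finset.card_pos.mpr (Finset.nonempty_iff_ne_empty.mpr hne)
  set φ : Fin k → {e // e ∈ E} := fun j => E.equivFin.symm j with hφ
  have hφinj : Function.Injective φ := fun a b h => by
    simpa [hφ] using E.equivFin.symm.injective h
  choose a b hab hp using fun j : Fin k => Finset.card_eq_two.mp (hmcard (φ j))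
  have hpair : ∀ j, ({a j, b j} : Finset V) = m (φ j) := fun j => (hp j).symm
  -- components of the extended SDRP
  have hnewB : ∀ j : Fin k, (φ j).1 ∈ ℬ := fun j => hE (φ j).2
  have holdpair_not : ∀ i (j : Fin k), ({D.x i, D.y i} : Finset V) ≠ m (φ j) := by
    intro i j h
    have hsub : ({D.x i, D.y i} : Finset V) ⊆ (φ j).1 := h ▸ hmsub (φ j)
    exact D.hnot i _ (hBH _ (hnewB j)) (hBf _ (hnewB j)) hsub
  have hpinj : Function.Injective
      (Fin.append (fun i => ({D.x i, D.y i} : Finset V)) (fun j => m (φ j))) :=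
    append_inj D.hpairs (fun a b h => hφinj (hminj h)) holdpair_not
  have hfinj' : Function.Injective (Fin.append D.f (fun j => (φ j).1)) :=
    append_inj D.hfinj (fun a b h => hφinj (Subtype.val_injective h))
      (fun i j => hBf _ (hnewB j) i)
  -- the extended SDRP
  have hxy : ∀ i : Fin (D.s + k),
      ({Fin.append D.x a i, Fin.append D.y b i} : Finset V) =
      Fin.append (fun i => ({D.x i, D.y i} : Finset V)) (fun j => m (φ j)) i := by
    intro i
    induction i using Fin.addCases with
    | left i => simp [Fin.append_left]
    | right i => simp [Fin.append_right, hpair]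
  refine absurd (hmax ⟨D.s + k, Fin.append D.x a, Fin.append D.y b,
    Fin.append D.f (fun j => (φ j).1), ?_, ?_, hfinj', ?_, ?_, ?_⟩) (by simp; omega)
  · -- hne
    intro i
    induction i using Fin.addCases with
    | left i => simpa [Fin.append_left] using D.hne i
    | right i => simpa [Fin.append_right] using hab i
  · -- hpairs
    intro i₁ i₂ h
    simp only [hxy] at h
    exact hpinj h
  · -- hfH
    intro i
    induction i using Fin.addCases with
    | left i => simpa [Fin.append_left] using D.hfH i
    | right i => simpa [Fin.append_right] using hBH _ (hnewB i)
  · -- hsub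
    intro i
    induction i using Fin.addCases with
    | left i => simpa [Fin.append_left] using D.hsub i
    | right i =>
      simp only [Fin.append_right]
      rw [show ({a i, b i} : Finset V) = m (φ i) from hpair i]
      exact hmsub (φ i)
  · -- hnot
    intro i g hg hgne hsubg
    induction i using Fin.addCases with
    | left i =>
      simp only [Fin.append_left] at hsubg
      refine D.hnot i g hg (fun j => ?_) hsubg
      simpa [Fin.append_left] using hgne (Fin.castAdd k j)
    | right i =>
      simp only [Fin.append_right] at hsubg
      rw [show ({a i, b i} : Finset V) = m (φ i) from hpair i] at hsubg
      have hgB : g ∈ ℬ := by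
        rw [hB, Finset.mem_sdiff]
        refine ⟨hg, fun hmem => ?_⟩
        obtain ⟨j, -, hj⟩ := Finset.mem_image.mp hmem
        exact hgne (Fin.castAdd k j) (by simpa [Fin.append_left] using hj)
      have hgE : g ∈ E := hcover g hgB ⟨φ i, hsubg⟩
      have := hgne (Fin.natAdd D.s (E.equivFin ⟨g, hgE⟩))
      simp only [Fin.append_right, hφ, Equiv.symm_apply_apply] at this
      exact this rfl

theorem stmt_7 {V : Type*} [Fintype V] [DecidableEq V]
    (H : Finset (Finset V)) (D : SDRP V H)
    (hmax : ∀ D' : SDRP V H, D'.s ≤ D.s)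
    (ℬ : Finset (Finset V)) (hB : ℬ = H \ Finset.univ.image D.f)
    (S : Finset (Finset V)) (hSne : S.Nonempty)
    (hS : ∀ p ∈ S, p.card = 2 ∧ ∃ e ∈ ℬ, p ⊆ e) :
    S.card < (ℬ.filter (fun e => ∃ p ∈ S, p ⊆ e)).card := by
  classical
  suffices h : ∀ n (S : Finset (Finset V)), S.card = n → S.Nonempty →
      (∀ p ∈ S, p.card = 2 ∧ ∃ e ∈ ℬ, p ⊆ e) →
      S.card < (ℬ.filter (fun e => ∃ p ∈ S, p ⊆ e)).card from
    h S.card S rfl hSne hS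
  intro n
  induction n using Nat.strong_induction_on with
  | _ n ih =>
  intro S hn hSne hS
  by_contra hcon
  push_neg at hcon
  set BS := ℬ.filter (fun e => ∃ p ∈ S, p ⊆ e) with hBS
  -- Hall's condition on the bipartite graph (BS, S)
  have hall : ∀ s : Finset {e // e ∈ BS},
      s.card ≤ (s.biUnion (fun e => S.filter (fun p => p ⊆ e.1))).card := by
    intro s
    by_contra hlt
    push_neg at hlt
    set N := s.biUnion (fun e => S.filter (fun p => p ⊆ e.1)) with hN
    have hNS : N ⊆ S := by
      intro p hp
      obtain ⟨e, -, hpe⟩ := Finset.mem_biUnion.mp hp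
      exact (Finset.mem_filter.mp hpe).1
    set S'' := S \ N with hS''
    set E' := s.image Subtype.val with hE'
    have hE'card : E'.card = s.card := Finset.card_image_of_injective _ Subtype.val_injective
    have hE'BS : E' ⊆ BS := by
      intro g hg
      obtain ⟨e, -, rfl⟩ := Finset.mem_image.mp hg
      exact e.2
    have hscard : s.card ≤ BS.card := by
      calc s.card ≤ Fintype.card {e // e ∈ BS} := Finset.card_le_univ s
        _ = BS.card := Fintype.card_coe BS
    by_cases hS''ne : S''.Nonempty
    · -- apply induction hypothesis to S''
      have hNne : N.Nonempty := by
        have : 0 < s.card := lt_of_le_of_lt (Nat.zero_le _) hlt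
        obtain ⟨e, he⟩ := Finset.card_pos.mp this
        obtain ⟨-, p, hpS, hpe⟩ := Finset.mem_filter.mp e.2
        exact ⟨p, Finset.mem_biUnion.mpr ⟨e, he, Finset.mem_filter.mpr ⟨hpS, hpe⟩⟩⟩
      have hS''lt : S''.card < S.card := by
        have hssub : S'' ⊂ S := by
          rw [hS'']
          refine Finset.sdiff_ssubset ?_ hNne
          exact hNS
        exact Finset.card_lt_card hssub
      have hIH := ih S''.card (hn ▸ hS''lt) S'' rfl hS''ne
        (fun p hp => hS p (Finset.mem_sdiff.mp hp).1)
      set BS'' := ℬ.filter (fun e => ∃ p ∈ S'', p ⊆ e) with hBS''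
      have hdisj : ∀ g ∈ BS'', g ∉ E' := by
        intro g hg hgE
        obtain ⟨e, hes, rfl⟩ := Finset.mem_image.mp hgE
        rw [hBS'', Finset.mem_filter] at hg
        obtain ⟨-, p, hpS'', hpe⟩ := hg
        rw [hS'', Finset.mem_sdiff] at hpS''
        exact hpS''.2 (Finset.mem_biUnion.mpr ⟨e, hes,
          Finset.mem_filter.mpr ⟨hpS''.1, hpe⟩⟩)
      have hBS''BS : BS'' ⊆ BS := by
        intro g hg
        rw [hBS'', Finset.mem_filter] at hg
        obtain ⟨hgB, p, hpS'', hpe⟩ := hg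
        exact Finset.mem_filter.mpr ⟨hgB, p, (Finset.mem_sdiff.mp hpS'').1, hpe⟩
      have hunion : BS''.card + E'.card ≤ BS.card := by
        rw [← Finset.card_union_of_disjoint (Finset.disjoint_left.mpr hdisj)]
        exact Finset.card_le_card (Finset.union_subset hBS''BS hE'BS)
      have hsum : S''.card + N.card = S.card := Finset.card_sdiff_add_card_eq_card hNS
      omega
    · -- S'' empty means S ⊆ N
      rw [Finset.not_nonempty_iff_eq_empty, hS'', Finset.sdiff_eq_empty_iff_subset] at hS''ne
      have := Finset.card_le_card hS''ne
      omega
  obtain ⟨m, hminj, hm⟩ := (Finset.all_card_le_biUnion_card_iff_exists_injective _).mp hall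
  have hmS : ∀ e, m e ∈ S := fun e => (Finset.mem_filter.mp (hm e)).1
  have hmsub : ∀ e, m e ⊆ e.1 := fun e => (Finset.mem_filter.mp (hm e)).2
  have hBSempty : BS = ∅ := by
    refine no_cover H D hmax ℬ hB BS (Finset.filter_subset _ _) m hminj
      (fun e => (hS _ (hmS e)).1) hmsub ?_
    intro g hg ⟨e, he⟩
    exact Finset.mem_filter.mpr ⟨hg, m e, hmS e, he⟩
  obtain ⟨p, hpS⟩ := hSne
  obtain ⟨-, e, heB, hpe⟩ := hS p hpS
  have : e ∈ BS := Finset.mem_filter.mpr ⟨heB, p, hpS, hpe⟩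
  simp [hBSempty] at this
end

section
/- Let H be a hypergraph and let (A, 𝒜) be an SDRP of H of maximum size, with ℬ = H∖𝒜 and B = ∂₂ℬ. Let G be the graph on V(H) with edge set A ∪ B. If G contains a copy of a graph F, then H contains a Berge copy of F on the same base vertex set. -/
lemma finAppend_inj {β : Type*} {m n : ℕ} {a : Fin m → β} {b : Fin n → β}
    (ha : Function.Injective a) (hb : Function.Injective b)
    (hab : ∀ i j, a i ≠ b j) : Function.Injective (Fin.append a b) := by
  intro i j h
  induction i using Fin.addCases with
  | left i =>
    induction j using Fin.addCases with
    | left j =>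
      rw [Fin.append_left, Fin.append_left] at h
      exact congrArg _ (ha h)
    | right j =>
      rw [Fin.append_left, Fin.append_right] at h
      exact absurd h (hab i j)
  | right i =>
    induction j using Fin.addCases with
    | left j =>
      rw [Fin.append_right, Fin.append_left] at h
      exact absurd h.symm (hab j i)
    | right j =>
      rw [Fin.append_right, Fin.append_right] at h
      exact congrArg _ (hb h)

/-- If we can find `k` new pairs, contained only in edges outside the
representative set, with a system of distinct representatives among those edges
that covers *all* edges containing one of the new pairs, then we can enlarge the
SDRP by `k`. -/
lemma exists_bigger {V : Type*} [DecidableEq V] (H : Finset (Finset V)) (D : SDRP V H)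
    (k : ℕ) (P m' : Fin k → Finset V)
    (hPinj : Function.Injective P) (hPcard : ∀ j, (P j).card = 2)
    (hminj : Function.Injective m')
    (hmB : ∀ j, m' j ∈ H ∧ m' j ∉ Finset.univ.image D.f)
    (hPm : ∀ j, P j ⊆ m' j)
    (hcov : ∀ g ∈ H, g ∉ Finset.univ.image D.f → (∃ j, P j ⊆ g) → ∃ j, m' j = g) :
    ∃ D' : SDRP V H, D'.s = D.s + k := by
  have hxy : ∀ j, ∃ x y : V, x ≠ y ∧ P j = {x, y} := fun j =>
    Finset.card_eq_two.mp (hPcard j)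
  choose x' y' hne' hP' using hxy
  -- no new pair coincides with an old pair
  have hPold : ∀ j i, P j ≠ ({D.x i, D.y i} : Finset V) := by
    intro j i h
    have hnm : ∀ j', D.f j' ≠ m' j := by
      intro j' hj'
      exact (hmB j).2 (Finset.mem_image.mpr ⟨j', Finset.mem_univ _, hj'⟩)
    exact D.hnot i (m' j) (hmB j).1 hnm (h ▸ hPm j)
  refine ⟨{
    s := D.s + k
    x := Fin.append D.x x'
    y := Fin.append D.y y'
    f := Fin.append D.f m'
    hne := by
      intro i
      induction i using Fin.addCases with
      | left i => rw [Fin.append_left, Fin.append_left]; exact D.hne i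
      | right i => rw [Fin.append_right, Fin.append_right]; exact hne' i
    hpairs := by
      intro i j h
      simp only at h
      induction i using Fin.addCases with
      | left i =>
        induction j using Fin.addCases with
        | left j =>
          rw [Fin.append_left, Fin.append_left, Fin.append_left, Fin.append_left] at h
          exact congrArg _ (D.hpairs h)
        | right j =>
          rw [Fin.append_left, Fin.append_left, Fin.append_right, Fin.append_right] at h
          rw [← hP' j] at h
          exact absurd h.symm (hPold j i)
      | right i =>
        induction j using Fin.addCases with
        | left j =>
          rw [Fin.append_right, Fin.append_right, Fin.append_left, Fin.append_left] at h
          rw [← hP' i] at h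
          exact absurd h (hPold i j)
        | right j =>
          rw [Fin.append_right, Fin.append_right, Fin.append_right, Fin.append_right] at h
          rw [← hP' i, ← hP' j] at h
          exact congrArg _ (hPinj h)
    hfinj := by
      refine finAppend_inj D.hfinj hminj ?_
      intro i j hj
      exact (hmB j).2 (Finset.mem_image.mpr ⟨i, Finset.mem_univ _, hj⟩)
    hfH := by
      intro i
      induction i using Fin.addCases with
      | left i => rw [Fin.append_left]; exact D.hfH i
      | right i => rw [Fin.append_right]; exact (hmB i).1
    hsub := by
      intro i
      induction i using Fin.addCases with
      | left i =>
        rw [Fin.append_left, Fin.append_left, Fin.append_left]; exact D.hsub i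
      | right i =>
        rw [Fin.append_right, Fin.append_right, Fin.append_right, ← hP' i]
        exact hPm i
    hnot := by
      intro i g hg hgne
      have hgold : ∀ j, D.f j ≠ g := by
        intro j
        have := hgne (Fin.castAdd k j)
        rwa [Fin.append_left] at this
      have hgnew : ∀ j, m' j ≠ g := by
        intro j
        have := hgne (Fin.natAdd D.s j)
        rwa [Fin.append_right] at this
      induction i using Fin.addCases with
      | left i =>
        rw [Fin.append_left, Fin.append_left]
        exact D.hnot i g hg hgold
      | right i =>
        rw [Fin.append_right, Fin.append_right, ← hP' i]
        intro hsubg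
        have hgnotim : g ∉ Finset.univ.image D.f := by
          intro hmem
          obtain ⟨j', _, hj'⟩ := Finset.mem_image.mp hmem
          exact hgold j' hj'
        obtain ⟨j', hj'⟩ := hcov g hg hgnotim ⟨i, hsubg⟩
        exact hgnew j' hj' }, rfl⟩

lemma finset_pair_eq_pair {V : Type*} [DecidableEq V] {a b c d : V} (hab : a ≠ b)
    (h : ({a, b} : Finset V) = {c, d}) : (a = c ∧ b = d) ∨ (a = d ∧ b = c) := by
  have ha : a ∈ ({c, d} : Finset V) := h ▸ Finset.mem_insert_self a {b}
  have hb : b ∈ ({c, d} : Finset V) := h ▸ Finset.mem_insert_of_mem (Finset.mem_singleton_self b)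
  rw [Finset.mem_insert, Finset.mem_singleton] at ha hb
  rcases ha with rfl | rfl <;> rcases hb with rfl | rfl
  · exact absurd rfl hab
  · exact Or.inl ⟨rfl, rfl⟩
  · exact Or.inr ⟨rfl, rfl⟩
  · exact absurd rfl hab

theorem stmt_8 {V : Type*} [Fintype V] [DecidableEq V]
    {α : Type*} [Fintype α] [DecidableEq α]
    (H : Finset (Finset V)) (D : SDRP V H)
    (hmax : ∀ D' : SDRP V H, D'.s ≤ D.s)
    (ℬ : Finset (Finset V)) (hB : ℬ = H \ Finset.univ.image D.f)
    (F : SimpleGraph α) [DecidableRel F.Adj]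
    (w : α → V) (hw : Function.Injective w)
    -- `G`, the graph with edge set `A ∪ B`, contains the copy of `F` on `w`
    (hcopy : ∀ a b, F.Adj a b →
      ((∃ i, ({w a, w b} : Finset V) = {D.x i, D.y i}) ∨
        ∃ e ∈ ℬ, ({w a, w b} : Finset V) ⊆ e)) :
    -- then `H` contains a Berge `F` on the same base vertex set `w`
    ∃ g : F.edgeFinset → Finset V, Function.Injective g ∧
      (∀ e, g e ∈ H) ∧
      ∀ (e : F.edgeFinset) (a b : α), (e : Sym2 α) = s(a, b) →
        ({w a, w b} : Finset V) ⊆ g e := by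
  classical
  subst hB
  set ℬ : Finset (Finset V) := H \ Finset.univ.image D.f with hBdef
  -- the 2-shadow of ℬ
  set B2 : Finset (Finset V) := ℬ.biUnion (fun e => e.powersetCard 2) with hB2def
  have hB2mem : ∀ p : Finset V, p ∈ B2 ↔ ∃ e ∈ ℬ, p ⊆ e ∧ p.card = 2 := by
    intro p
    simp [hB2def, Finset.mem_biUnion, Finset.mem_powersetCard]
  -- the bipartite incidence between pairs of the shadow and edges of ℬ
  set t : ↥B2 → Finset (Finset V) := fun p => ℬ.filter (fun e => p.1 ⊆ e) with htdef
  -- Hall's condition, from maximality of the SDRP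
  have hall : ∀ n (v : Finset ↥B2), v.card ≤ n → v.card ≤ (v.biUnion t).card := by
    intro n
    induction n with
    | zero => intro v hv; exact hv.trans (Nat.zero_le _)
    | succ n ih =>
      intro v hv
      by_contra hlt
      push_neg at hlt
      have hvne : v.Nonempty := by
        rw [← Finset.card_pos]; omega
      obtain ⟨q, hq⟩ := hvne
      set v' := v.erase q with hv'def
      have hv'card : v'.card = v.card - 1 := Finset.card_erase_of_mem hq
      have hsubsets : ∀ u : Finset ↥B2, u ⊆ v' → u.card ≤ (u.biUnion t).card := by
        intro u hu
        apply ih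
        have h1 := Finset.card_le_card hu
        omega
      -- matching on v' by Hall's theorem
      obtain ⟨m, hminj, hmem⟩ :=
        (Finset.all_card_le_biUnion_card_iff_existsInjective'
          (fun p : ↥v' => t p.1)).mp (by
          intro u
          have hcard : u.card = (u.image Subtype.val).card :=
            (Finset.card_image_of_injective u Subtype.val_injective).symm
          have hbu : (u.image Subtype.val).biUnion t = u.biUnion (fun p : ↥v' => t p.1) :=
            Finset.image_biUnion
          rw [hcard, ← hbu]
          apply hsubsets
          intro p hp
          obtain ⟨p', hp', rfl⟩ := Finset.mem_image.mp hp
          exact p'.2)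
      set N := v.biUnion t with hNdef
      have hN1 : ∀ p : ↥v', m p ∈ N := by
        intro p
        exact Finset.mem_biUnion.mpr ⟨p.1, Finset.mem_of_mem_erase p.2, hmem p⟩
      have hv'le : v'.card ≤ N.card := by
        have h1 : v'.card ≤ (v'.biUnion t).card := hsubsets v' Finset.Subset.rfl
        have h2 : (v'.biUnion t) ⊆ N := by
          apply Finset.biUnion_subset_biUnion_of_subset_left
          exact Finset.erase_subset _ _
        exact h1.trans (Finset.card_le_card h2)
      have hNcard : N.card = v'.card := by omega
      have himsub : (Finset.univ.image (fun p : ↥v' => m p)) ⊆ N := by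
        intro g hg
        obtain ⟨p, _, rfl⟩ := Finset.mem_image.mp hg
        exact hN1 p
      have himcard : (Finset.univ.image (fun p : ↥v' => m p)).card = v'.card := by
        rw [Finset.card_image_of_injective _ hminj, Finset.card_univ, Fintype.card_coe]
      have himage : (Finset.univ.image (fun p : ↥v' => m p)) = N :=
        Finset.eq_of_subset_of_card_le himsub (by omega)
      -- build the bigger SDRP
      set enum : Fin v'.card ≃ ↥v' := v'.equivFin.symm with henum
      have hmemt : ∀ p : ↥v', m p ∈ ℬ ∧ p.1.1 ⊆ m p := by
        intro p
        have := hmem p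
        rw [htdef, Finset.mem_filter] at this
        exact this
      obtain ⟨D', hD'⟩ := exists_bigger H D v'.card
        (fun j => ((enum j : ↥B2) : Finset V)) (fun j => m (enum j))
        (by
          intro i j h
          apply enum.injective
          exact Subtype.ext (Subtype.ext h))
        (by
          intro j
          obtain ⟨e, _, _, hc⟩ := (hB2mem _).mp (enum j : ↥B2).2
          exact hc)
        (fun i j h => enum.injective (hminj h))
        (by
          intro j
          have h1 := (hmemt (enum j)).1
          rw [hBdef, Finset.mem_sdiff] at h1
          exact h1)
        (fun j => (hmemt (enum j)).2)
        (by
          intro g hg hgim ⟨j, hj⟩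
          have hgB : g ∈ ℬ := by rw [hBdef, Finset.mem_sdiff]; exact ⟨hg, hgim⟩
          have hgt : g ∈ t (enum j : ↥B2) := by
            rw [htdef, Finset.mem_filter]; exact ⟨hgB, hj⟩
          have hgN : g ∈ N := Finset.mem_biUnion.mpr
            ⟨(enum j : ↥B2), Finset.mem_of_mem_erase (enum j).2, hgt⟩
          rw [← himage] at hgN
          obtain ⟨p, _, hp⟩ := Finset.mem_image.mp hgN
          refine ⟨enum.symm p, ?_⟩
          show m (enum (enum.symm p)) = g
          rw [Equiv.apply_symm_apply]
          exact hp)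
      have := hmax D'
      rw [hD'] at this
      have hk : v'.card = 0 := by omega
      -- then v = {q} and N = ∅, but t q is nonempty
      have hNze : N.card = 0 := by omega
      obtain ⟨e, heB, hesub, _⟩ := (hB2mem _).mp q.2
      have het : e ∈ t q := by rw [htdef, Finset.mem_filter]; exact ⟨heB, hesub⟩
      have heN : e ∈ N := Finset.mem_biUnion.mpr ⟨q, hq, het⟩
      have : 0 < N.card := Finset.card_pos.mpr ⟨e, heN⟩
      omega
  -- the SDR for all pairs of the shadow
  obtain ⟨μ, hμinj, hμmem⟩ :=
    (Finset.all_card_le_biUnion_card_iff_existsInjective' t).mp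
      (fun v => hall v.card v le_rfl)
  have hμB : ∀ p : ↥B2, μ p ∈ ℬ ∧ p.1 ⊆ μ p := by
    intro p
    have := hμmem p
    rw [htdef, Finset.mem_filter] at this
    exact this
  -- the pair function on edges of F
  set pe : Sym2 α → Finset V :=
    Sym2.lift ⟨fun a b => ({w a, w b} : Finset V), fun a b => Finset.pair_comm (w a) (w b)⟩
    with hpedef
  have hpe : ∀ a b, pe s(a, b) = ({w a, w b} : Finset V) := fun a b => rfl
  have hedge : ∀ z ∈ F.edgeFinset, ∃ a b, F.Adj a b ∧ z = s(a, b) := by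
    intro z hz
    induction z using Sym2.ind with
    | _ a b => exact ⟨a, b, F.mem_edgeSet.mp (SimpleGraph.mem_edgeFinset.mp hz), rfl⟩
  -- injectivity of the pair function on edges
  have hpeinj : ∀ e1 e2 : F.edgeFinset, pe e1 = pe e2 → e1 = e2 := by
    rintro e1 e2 h
    obtain ⟨a, b, hab, hz1⟩ := hedge e1 e1.2
    obtain ⟨c, d, hcd, hz2⟩ := hedge e2 e2.2
    rw [hz1, hz2, hpe, hpe] at h
    have hne : w a ≠ w b := fun hc => hab.ne (hw hc)
    apply Subtype.ext
    rw [hz1, hz2, Sym2.eq_iff]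
    rcases finset_pair_eq_pair hne h with ⟨h1, h2⟩ | ⟨h1, h2⟩
    · exact Or.inl ⟨hw h1, hw h2⟩
    · exact Or.inr ⟨hw h1, hw h2⟩
  -- each edge is either an A-type or B-type pair
  have hprops : ∀ e : F.edgeFinset,
      (∃ i, pe e = {D.x i, D.y i}) ∨ pe e ∈ B2 := by
    intro e
    obtain ⟨a, b, hab, hz⟩ := hedge e e.2
    rw [hz, hpe]
    rcases hcopy a b hab with h | ⟨e', he', hsub⟩
    · exact Or.inl h
    · refine Or.inr ((hB2mem _).mpr ⟨e', he', hsub, ?_⟩)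
      exact Finset.card_pair (fun hc => hab.ne (hw hc))
  refine ⟨fun e =>
    if h : ∃ i, pe e = {D.x i, D.y i} then D.f h.choose
    else μ ⟨pe e, (hprops e).resolve_left h⟩, ?_, ?_, ?_⟩
  · -- injectivity
    intro e1 e2 heq
    by_cases h1 : ∃ i, pe (e1 : Sym2 α) = {D.x i, D.y i} <;>
      by_cases h2 : ∃ i, pe (e2 : Sym2 α) = {D.x i, D.y i} <;>
      simp only [h1, h2, dif_pos, dif_neg, not_false_iff] at heq
    · apply hpeinj
      rw [h1.choose_spec, h2.choose_spec, D.hfinj heq]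
    · exfalso
      have hμ := (hμB ⟨pe (e2 : Sym2 α), (hprops e2).resolve_left h2⟩).1
      rw [← heq, hBdef, Finset.mem_sdiff] at hμ
      exact hμ.2 (Finset.mem_image.mpr ⟨h1.choose, Finset.mem_univ _, rfl⟩)
    · exfalso
      have hμ := (hμB ⟨pe (e1 : Sym2 α), (hprops e1).resolve_left h1⟩).1
      rw [heq, hBdef, Finset.mem_sdiff] at hμ
      exact hμ.2 (Finset.mem_image.mpr ⟨h2.choose, Finset.mem_univ _, rfl⟩)
    · apply hpeinj
      have := hμinj heq
      exact congrArg Subtype.val this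
  · -- membership in H
    intro e
    by_cases h : ∃ i, pe (e : Sym2 α) = {D.x i, D.y i} <;>
      simp only [h, dif_pos, dif_neg, not_false_iff]
    · exact D.hfH _
    · have hμ := (hμB ⟨pe (e : Sym2 α), (hprops e).resolve_left h⟩).1
      rw [hBdef, Finset.mem_sdiff] at hμ
      exact hμ.1
  · -- containment
    intro e a b he
    have hpair : ({w a, w b} : Finset V) = pe (e : Sym2 α) := by rw [he, hpe]
    rw [hpair]
    by_cases h : ∃ i, pe (e : Sym2 α) = {D.x i, D.y i} <;>
      simp only [h, dif_pos, dif_neg, not_false_iff]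
    · exact fun x hx => D.hsub h.choose (h.choose_spec ▸ hx)
    · exact (hμB ⟨pe (e : Sym2 α), (hprops e).resolve_left h⟩).2
end

section
/- For integers k and t = ⌊(k-1)/2⌋ with k ≥ 7, and any integer r ≥ 3 with r ≤ k-4: (k-2)·t < C(k-1, 3) - C(k-4, 2) ≤ C(k-1, r) - C(r, 2). -/
lemma choose_mono_left_of_le_half {n a b : ℕ} (hab : a ≤ b) (hb : b ≤ n / 2) :
    n.choose a ≤ n.choose b := by
  induction b with
  | zero => simp [Nat.le_zero.mp hab]
  | succ b ih =>
    rcases Nat.eq_or_lt_of_le hab with h | h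
    · exact h ▸ le_rfl
    · exact le_trans (ih (by omega) (by omega))
        (Nat.choose_le_succ_of_lt_half_left (by omega))

theorem stmt_9 (r k t : ℕ) (hk : 7 ≤ k) (ht : t = (k - 1) / 2)
    (hr : 3 ≤ r) (hrk : r ≤ k - 4) :
    ((k - 2) * t : ℤ) < (k - 1).choose 3 - (k - 4).choose 2 ∧
      ((k - 1).choose 3 - (k - 4).choose 2 : ℤ) ≤ (k - 1).choose r - r.choose 2 := by
  obtain ⟨m, rfl⟩ : ∃ m, k = m + 7 := ⟨k - 7, by omega⟩
  have h1 : m + 7 - 1 = m + 6 := by omega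
  have h4 : m + 7 - 4 = m + 3 := by omega
  rw [h1, h4]
  have c3 : (m + 6).choose 3 * 6 = (m + 6) * (m + 5) * (m + 4) := by
    have := Nat.descFactorial_eq_factorial_mul_choose (m + 6) 3
    simp [Nat.descFactorial, Nat.factorial] at this
    ring_nf at this ⊢
    omega
  have c2 : (m + 3).choose 2 * 2 = (m + 3) * (m + 2) := by
    have := Nat.descFactorial_eq_factorial_mul_choose (m + 3) 2
    simp [Nat.descFactorial, Nat.factorial] at this
    ring_nf at this ⊢
    omega
  constructor
  · have htle : 2 * t ≤ m + 6 := by omega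
    have c3' : ((m + 6).choose 3 : ℤ) * 6 = (m + 6) * (m + 5) * (m + 4) := by
      exact_mod_cast congrArg (Nat.cast : ℕ → ℤ) c3
    have c2' : ((m + 3).choose 2 : ℤ) * 2 = (m + 3) * (m + 2) := by
      exact_mod_cast congrArg (Nat.cast : ℕ → ℤ) c2
    have htle' : 2 * (t : ℤ) ≤ m + 6 := by exact_mod_cast htle
    have hm : (0 : ℤ) ≤ m := Int.natCast_nonneg m
    push_cast
    nlinarith [sq_nonneg ((m : ℤ) + 1)]
  · have hmono : (m + 6).choose 3 ≤ (m + 6).choose r := by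
      rcases le_or_gt r ((m + 6) / 2) with h | h
      · exact choose_mono_left_of_le_half hr h
      · have hsym : (m + 6).choose r = (m + 6).choose (m + 6 - r) :=
          (Nat.choose_symm (by omega)).symm
        rw [hsym]
        exact choose_mono_left_of_le_half (by omega) (by omega)
    have hc2 : r.choose 2 ≤ (m + 3).choose 2 := Nat.choose_le_choose 2 hrk
    have : ((m + 6).choose 3 : ℤ) ≤ (m + 6).choose r := by exact_mod_cast hmono
    have h2' : (r.choose 2 : ℤ) ≤ (m + 3).choose 2 := by exact_mod_cast hc2
    linarith
end

section
/- For integers r ≥ 3, k ≥ r+4, and n with k ≤ n ≤ 2k-3: C(k-2, r) + 2(n-k+2) ≤ C(k-1, r) + (n-k+1) - C(r, 2). -/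
lemma choose_mono_half_s10 (m : ℕ) : ∀ a b : ℕ, a ≤ b → b ≤ m / 2 →
    m.choose a ≤ m.choose b := by
  intro a b hab
  induction hab with
  | refl => intro _; exact le_rfl
  | @step b' h ih =>
      intro hb
      exact (ih (le_trans (Nat.le_succ _) hb)).trans
        (Nat.choose_le_succ_of_lt_half_left hb)

lemma choose_two_le_s10 {m s : ℕ} (hs : 2 ≤ s) (hm : s + 2 ≤ m) :
    m.choose 2 ≤ m.choose s := by
  rcases le_or_gt s (m / 2) with h | h
  · exact choose_mono_half_s10 m 2 s hs h
  · have hsm : s ≤ m := by omega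
    rw [← Nat.choose_symm hsm]
    exact choose_mono_half_s10 m 2 (m - s) (by omega) (by omega)

lemma key_ineq {r k : ℕ} (hr : 3 ≤ r) (hk : r + 4 ≤ k) :
    k + r.choose 2 ≤ (k - 2).choose (r - 1) := by
  have h1 : (k - 2).choose 2 ≤ (k - 2).choose (r - 1) :=
    choose_two_le_s10 (by omega) (by omega)
  refine le_trans ?_ h1
  obtain ⟨c, rfl⟩ := Nat.exists_eq_add_of_le hk
  have h2 : r.choose 2 ≤ (r + c).choose 2 := Nat.choose_le_choose 2 (by omega)
  have h3 : (r + 4 + c) - 2 = (r + c) + 2 := by omega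
  have h4 : ((r + c) + 2).choose 2 = (r + c).choose 2 + 2 * (r + c) + 1 := by
    simp [Nat.choose_succ_succ, Nat.choose_one_right]
    omega
  rw [h3, h4]
  omega

theorem stmt_10 (r k n : ℕ) (hr : 3 ≤ r) (hk : r + 4 ≤ k)
    (hn1 : k ≤ n) (hn2 : n ≤ 2 * k - 3) :
    ((k - 2).choose r : ℤ) + 2 * ((n : ℤ) - k + 2) ≤
      (k - 1).choose r + ((n : ℤ) - k + 1) - r.choose 2 := by
  obtain ⟨r', rfl⟩ : ∃ r', r = r' + 1 := ⟨r - 1, by omega⟩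
  have hpas : (k - 1).choose (r' + 1) = (k - 2).choose r' + (k - 2).choose (r' + 1) := by
    have e1 : k - 1 = (k - 2) + 1 := by omega
    rw [e1, Nat.choose_succ_succ]
  have hkey := key_ineq hr hk
  have hn2' : (n : ℤ) ≤ 2 * k - 3 := by
    have : (n : ℤ) ≤ ((2 * k - 3 : ℕ) : ℤ) := by exact_mod_cast hn2
    omega
  have hkey' : (k : ℤ) + (r' + 1).choose 2 ≤ (k - 2).choose (r' + 1 - 1) := by
    exact_mod_cast hkey
  simp only [Nat.add_sub_cancel] at hkey'
  rw [hpas]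
  push_cast
  omega
end

section
/- For integers r ≥ 3, k ≥ r+4 with t = ⌊(k-1)/2⌋, r ≥ t, and n with k ≤ n ≤ 2k-t-3: C(k-t, 2) + (n-k+t)·t < C(k-1, r) + (n-k+1) - C(r, 2). -/
lemma my_c2 (m : ℕ) : ((m+2).choose 2 : ℤ) * 2 = (m+2)*(m+1) := by
  induction m with
  | zero => decide
  | succ p ih =>
    have : (p+3).choose 2 = (p+2).choose 1 + (p+2).choose 2 := Nat.choose_succ_succ _ _
    rw [this]
    push_cast
    simp only [Nat.choose_one_right] at *
    push_cast at *
    linarith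

lemma my_c3 (m : ℕ) : ((m+3).choose 3 : ℤ) * 6 = (m+3)*(m+2)*(m+1) := by
  induction m with
  | zero => decide
  | succ p ih =>
    have : (p+4).choose 3 = (p+3).choose 2 + (p+3).choose 3 := Nat.choose_succ_succ _ _
    rw [this]
    have h2 := my_c2 (p+1)
    push_cast at *
    ring_nf at *
    linarith

lemma my_mono {n a b : ℕ} (hab : a ≤ b) (hb : b ≤ n/2) : n.choose a ≤ n.choose b := by
  induction b, hab using Nat.le_induction with
  | base => exact le_refl _
  | succ m hm ih =>
    exact (ih (by omega)).trans (Nat.choose_le_succ_of_lt_half_left (by omega))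

set_option maxHeartbeats 2000000 in
theorem stmt_11 (r k t n : ℕ) (hr : 3 ≤ r) (hk : r + 4 ≤ k)
    (ht : t = (k - 1) / 2) (hrt : t ≤ r)
    (hn1 : k ≤ n) (hn2 : n ≤ 2 * k - t - 3) :
    ((k - t).choose 2 : ℤ) + ((n : ℤ) - k + t) * t <
      (k - 1).choose r + ((n : ℤ) - k + 1) - r.choose 2 := by
  have hk7 : 7 ≤ k := by omega
  have ht3 : 3 ≤ t := by omega
  -- C(k-1,3) ≤ C(k-1,r)
  have hmono : (k-1).choose 3 ≤ (k-1).choose r := by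
    rcases le_or_gt r ((k-1)/2) with h | h
    · exact my_mono hr h
    · rw [(Nat.choose_symm (show r ≤ k - 1 by omega)).symm]
      exact my_mono (by omega) (by omega)
  have hr2 : r.choose 2 ≤ (k-4).choose 2 := Nat.choose_le_choose 2 (by omega)
  have e1 : ((k - t).choose 2 : ℤ) * 2 = ((k:ℤ) - t) * ((k:ℤ) - t - 1) := by
    obtain ⟨m, hm⟩ : ∃ m, k - t = m + 2 := ⟨k - t - 2, by omega⟩
    rw [hm]
    have := my_c2 m
    have h1 : (k:ℤ) - t = (m:ℤ) + 2 := by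
      have : ((k - t : ℕ) : ℤ) = (k:ℤ) - t := by omega
      omega
    rw [h1]; linarith
  have e2 : ((k - 4).choose 2 : ℤ) * 2 = ((k:ℤ) - 4) * ((k:ℤ) - 5) := by
    obtain ⟨m, hm⟩ : ∃ m, k - 4 = m + 2 := ⟨k - 6, by omega⟩
    rw [hm]
    have := my_c2 m
    have h1 : (k:ℤ) - 4 = (m:ℤ) + 2 := by omega
    have h2 : (k:ℤ) - 5 = (m:ℤ) + 1 := by omega
    rw [h1, h2]; linarith
  have e3 : ((k - 1).choose 3 : ℤ) * 6 = ((k:ℤ)-1)*((k:ℤ)-2)*((k:ℤ)-3) := by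
    obtain ⟨m, hm⟩ : ∃ m, k - 1 = m + 3 := ⟨k - 4, by omega⟩
    rw [hm]
    have := my_c3 m
    have h1 : (k:ℤ) - 1 = (m:ℤ) + 3 := by omega
    have h2 : (k:ℤ) - 2 = (m:ℤ) + 2 := by omega
    have h3 : (k:ℤ) - 3 = (m:ℤ) + 1 := by omega
    rw [h1, h2, h3]; linarith
  have hmZ : ((k-1).choose 3 : ℤ) ≤ ((k-1).choose r : ℤ) := by exact_mod_cast hmono
  have hr2Z : (r.choose 2 : ℤ) ≤ ((k-4).choose 2 : ℤ) := by exact_mod_cast hr2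
  have hnZ : (n : ℤ) ≤ 2*(k:ℤ) - (t:ℤ) - 3 := by
    have h1 : (n:ℤ) ≤ ((2*k - t - 3 : ℕ) : ℤ) := by exact_mod_cast hn2
    have h2 : ((2*k - t - 3 : ℕ) : ℤ) = 2*(k:ℤ) - t - 3 := by omega
    omega
  have hnZ1 : (k : ℤ) ≤ n := by exact_mod_cast hn1
  have z4 : 3 ≤ (t:ℤ) := by exact_mod_cast ht3
  have hpar : (k:ℤ) = 2*(t:ℤ)+1 ∨ (k:ℤ) = 2*(t:ℤ)+2 := by omega
  -- key polynomial inequality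
  have key : 3*((k:ℤ) - t)*((k:ℤ) - t - 1) + 6*((n:ℤ) - k + t)*t
      < ((k:ℤ)-1)*((k:ℤ)-2)*((k:ℤ)-3) + 6*((n:ℤ) - k + 1) - 3*((k:ℤ)-4)*((k:ℤ)-5) := by
    have hslack : 0 ≤ ((t:ℤ) - 1) * (2*(k:ℤ) - (t:ℤ) - 3 - (n:ℤ)) :=
      mul_nonneg (by linarith) (by linarith)
    rcases hpar with h | h <;> rw [h] <;> rw [h] at hslack <;> nlinarith [sq_nonneg ((t:ℤ) - 3), z4, hslack]
  linarith [key, e1, e2, e3, hmZ, hr2Z]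
end

section
/- For integers r ≥ 3, k ≥ r+4, and integers a, b with 1 < a ≤ b < k-1: max(C(a,2), C(a,r)) + max(C(b,2), C(b,r)) < max(C(a-1,2), C(a-1,r)) + max(C(b+1,2), C(b+1,r)). -/
private def fmx (r x : ℕ) : ℕ := max (x.choose 2) (x.choose r)

private lemma fmx_key (r x : ℕ) (hr : 3 ≤ r) (hx : 1 ≤ x) :
    2 * fmx r (x+1) < fmx r x + fmx r (x+2) := by
  obtain ⟨s, rfl⟩ : ∃ s, r = s + 3 := ⟨r - 3, by omega⟩
  have h2 : x.choose 2 + (x+2).choose 2 = 2 * (x+1).choose 2 + 1 := by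
    have e1 : (x+2).choose 2 = (x+1).choose 1 + (x+1).choose 2 :=
      Nat.choose_succ_succ (x+1) 1
    have e2 : (x+1).choose 2 = x.choose 1 + x.choose 2 :=
      Nat.choose_succ_succ x 1
    simp [e1, e2, Nat.choose_one_right]
    omega
  have hrr : x.choose (s+3) + (x+2).choose (s+3)
      = 2 * (x+1).choose (s+3) + x.choose (s+1) := by
    have e1 : (x+2).choose (s+3) = (x+1).choose (s+2) + (x+1).choose (s+3) :=
      Nat.choose_succ_succ (x+1) (s+2)
    have e2 : (x+1).choose (s+3) = x.choose (s+2) + x.choose (s+3) :=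
      Nat.choose_succ_succ x (s+2)
    have e3 : (x+1).choose (s+2) = x.choose (s+1) + x.choose (s+2) :=
      Nat.choose_succ_succ x (s+1)
    omega
  have hfx1 : fmx (s+3) x ≥ x.choose 2 := le_max_left _ _
  have hfx2 : fmx (s+3) x ≥ x.choose (s+3) := le_max_right _ _
  have hgx1 : fmx (s+3) (x+2) ≥ (x+2).choose 2 := le_max_left _ _
  have hgx2 : fmx (s+3) (x+2) ≥ (x+2).choose (s+3) := le_max_right _ _
  rcases le_or_gt ((x+1).choose (s+3)) ((x+1).choose 2) with h | h
  · have : fmx (s+3) (x+1) = (x+1).choose 2 := max_eq_left h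
    omega
  · have hm : fmx (s+3) (x+1) = (x+1).choose (s+3) := max_eq_right h.le
    have hpos : 0 < (x+1).choose 2 := Nat.choose_pos (by omega)
    have hle : s + 3 ≤ x + 1 := by
      by_contra hcon
      have := Nat.choose_eq_zero_of_lt (show x + 1 < s + 3 by omega)
      omega
    have hpos2 : 0 < x.choose (s+1) := Nat.choose_pos (by omega)
    omega

private lemma fmx_chain (r : ℕ) (hr : 3 ≤ r) :
    ∀ d n : ℕ, 2 ≤ n → fmx r n + fmx r (n+d) < fmx r (n-1) + fmx r (n+d+1) := by
  intro d
  induction d with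
  | zero =>
    intro n hn
    have := fmx_key r (n-1) hr (by omega)
    have h1 : n - 1 + 1 = n := by omega
    have h2 : n - 1 + 2 = n + 1 := by omega
    rw [h1, h2] at this
    simpa using by omega
  | succ d ih =>
    intro n hn
    have h1 := ih n hn
    have h2 := fmx_key r (n+d) hr (by omega)
    have e1 : n + d + 1 + 1 = n + d + 2 := by omega
    have e2 : n + (d+1) = n + d + 1 := by omega
    have e3 : n + (d+1) + 1 = n + d + 2 := by omega
    rw [e2, e1] at *
    omega

theorem stmt_14 (r k a b : ℕ) (hr : 3 ≤ r) (hk : r + 4 ≤ k)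
    (ha : 1 < a) (hab : a ≤ b) (hb : b < k - 1) :
    max (a.choose 2) (a.choose r) + max (b.choose 2) (b.choose r) <
      max ((a - 1).choose 2) ((a - 1).choose r) +
        max ((b + 1).choose 2) ((b + 1).choose r) := by
  have := fmx_chain r hr (b - a) a (by omega)
  have e : a + (b - a) = b := by omega
  rw [e] at this
  simpa [fmx] using this
end

section
/- Let k ≥ 7 and r with 3 ≤ r ≤ k-4, and let t = ⌊(k-1)/2⌋ with r < t. On vertex set [k-1], the following three r-uniform families are pairwise disjoint: F₁ = all r-subsets of [k-t]; F₂ = {e ∪ {i} : e an (r-1)-subset of [t], i ∈ [k-t+1, k-1]}; F₃ = {f ∪ {j} : f an (r-1)-subset of [k-t, k-1], j ∈ [k-t-1]}. Consequently C(k-t,r) + (t-1)·C(t,r-1) + (k-t-1)·C(t,r-1) ≤ C(k-1,r). -/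
theorem stmt_16 (k t r : ℕ) (hk : 7 ≤ k) (ht : t = (k - 1) / 2)
    (hr : 3 ≤ r) (hrt : r < t)
    (F₁ F₂ F₃ : Finset (Finset ℕ))
    (hF₁ : F₁ = (Finset.Icc 1 (k - t)).powersetCard r)
    (hF₂ : F₂ = Finset.image (fun p => insert p.2 p.1)
        (((Finset.Icc 1 t).powersetCard (r - 1)) ×ˢ Finset.Icc (k - t + 1) (k - 1)))
    (hF₃ : F₃ = Finset.image (fun p => insert p.2 p.1)
        (((Finset.Icc (k - t) (k - 1)).powersetCard (r - 1)) ×ˢ Finset.Icc 1 (k - t - 1))) :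
    (Disjoint F₁ F₂ ∧ Disjoint F₁ F₃ ∧ Disjoint F₂ F₃) ∧
      (k - t).choose r + (t - 1) * t.choose (r - 1) + (k - t - 1) * t.choose (r - 1)
        ≤ (k - 1).choose r := by
  have hkt : t + 1 ≤ k - t := by omega
  have ht3 : 3 ≤ t := by omega
  -- extraction lemmas
  have mem1 : ∀ s ∈ F₁, s ⊆ Finset.Icc 1 (k - t) ∧ s.card = r := by
    intro s hs; rw [hF₁, Finset.mem_powersetCard] at hs; exact hs
  have mem2 : ∀ s ∈ F₂, ∃ e i, e ⊆ Finset.Icc 1 t ∧ e.card = r - 1 ∧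
      k - t + 1 ≤ i ∧ i ≤ k - 1 ∧ s = insert i e := by
    intro s hs
    rw [hF₂, Finset.mem_image] at hs
    obtain ⟨⟨e, i⟩, hp, rfl⟩ := hs
    rw [Finset.mem_product, Finset.mem_powersetCard, Finset.mem_Icc] at hp
    exact ⟨e, i, hp.1.1, hp.1.2, hp.2.1, hp.2.2, rfl⟩
  have mem3 : ∀ s ∈ F₃, ∃ f j, f ⊆ Finset.Icc (k - t) (k - 1) ∧ f.card = r - 1 ∧
      1 ≤ j ∧ j ≤ k - t - 1 ∧ s = insert j f := by
    intro s hs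
    rw [hF₃, Finset.mem_image] at hs
    obtain ⟨⟨f, j⟩, hp, rfl⟩ := hs
    rw [Finset.mem_product, Finset.mem_powersetCard, Finset.mem_Icc] at hp
    exact ⟨f, j, hp.1.1, hp.1.2, hp.2.1, hp.2.2, rfl⟩
  -- two big elements in F₃ members
  have big3 : ∀ s ∈ F₃, ∃ a ∈ s, ∃ b ∈ s, a ≠ b ∧ k - t ≤ a ∧ k - t ≤ b := by
    intro s hs
    obtain ⟨f, j, hf, hcard, _, _, rfl⟩ := mem3 s hs
    have h2 : 1 < f.card := by omega
    obtain ⟨a, ha, b, hb, hab⟩ := Finset.one_lt_card.1 h2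
    refine ⟨a, Finset.mem_insert_of_mem ha, b, Finset.mem_insert_of_mem hb, hab, ?_, ?_⟩
    · exact (Finset.mem_Icc.1 (hf ha)).1
    · exact (Finset.mem_Icc.1 (hf hb)).1
  have d12 : Disjoint F₁ F₂ := by
    rw [Finset.disjoint_left]
    intro s hs1 hs2
    obtain ⟨e, i, _, _, hi1, hi2, rfl⟩ := mem2 s hs2
    have hi : i ∈ Finset.Icc 1 (k - t) := (mem1 _ hs1).1 (Finset.mem_insert_self i e)
    rw [Finset.mem_Icc] at hi
    omega
  have d13 : Disjoint F₁ F₃ := by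
    rw [Finset.disjoint_left]
    intro s hs1 hs3
    obtain ⟨a, ha, b, hb, hab, ha2, hb2⟩ := big3 s hs3
    have ha1 := Finset.mem_Icc.1 ((mem1 _ hs1).1 ha)
    have hb1 := Finset.mem_Icc.1 ((mem1 _ hs1).1 hb)
    omega
  have d23 : Disjoint F₂ F₃ := by
    rw [Finset.disjoint_left]
    intro s hs2 hs3
    obtain ⟨e, i, he, _, hi1, hi2, rfl⟩ := mem2 s hs2
    obtain ⟨a, ha, b, hb, hab, ha2, hb2⟩ := big3 _ hs3
    have key : ∀ x ∈ insert i e, k - t ≤ x → x = i := by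
      intro x hx hxl
      rcases Finset.mem_insert.1 hx with h | h
      · exact h
      · have := (Finset.mem_Icc.1 (he h)).2; omega
    have := key a ha ha2
    have := key b hb hb2
    omega
  -- cardinalities
  have c1 : F₁.card = (k - t).choose r := by
    rw [hF₁, Finset.card_powersetCard, Nat.card_Icc]
    norm_num
  have inj2 : Set.InjOn (fun p : Finset ℕ × ℕ => insert p.2 p.1)
      (((((Finset.Icc 1 t).powersetCard (r - 1)) ×ˢ Finset.Icc (k - t + 1) (k - 1)) :
        Finset (Finset ℕ × ℕ)) : Set (Finset ℕ × ℕ)) := by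
    rintro ⟨e, i⟩ hp ⟨e', i'⟩ hq h
    rw [Finset.mem_coe, Finset.mem_product, Finset.mem_powersetCard, Finset.mem_Icc] at hp hq
    have h : insert i e = insert i' e' := h
    have hii : i = i' := by
      have hmem : i ∈ insert i' e' := h ▸ Finset.mem_insert_self i e
      rcases Finset.mem_insert.1 hmem with h1 | h1
      · exact h1
      · have := (Finset.mem_Icc.1 (hq.1.1 h1)).2; omega
    subst hii
    have hie : i ∉ e := by
      intro hmem; have := (Finset.mem_Icc.1 (hp.1.1 hmem)).2; omega
    have hie' : i ∉ e' := by
      intro hmem; have := (Finset.mem_Icc.1 (hq.1.1 hmem)).2; omega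
    have hee : e = e' := by
      have h2 := congrArg (fun s => Finset.erase s i) h
      simpa [Finset.erase_insert, hie, hie'] using h2
    simp [hee]
  have c2 : F₂.card = t.choose (r - 1) * (t - 1) := by
    rw [hF₂, Finset.card_image_of_injOn inj2, Finset.card_product,
      Finset.card_powersetCard, Nat.card_Icc, Nat.card_Icc]
    have e1 : t + 1 - 1 = t := by omega
    have e2 : k - 1 + 1 - (k - t + 1) = t - 1 := by omega
    rw [e1, e2]
  have inj3 : Set.InjOn (fun p : Finset ℕ × ℕ => insert p.2 p.1)
      (((((Finset.Icc (k - t) (k - 1)).powersetCard (r - 1)) ×ˢ Finset.Icc 1 (k - t - 1)) :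
        Finset (Finset ℕ × ℕ)) : Set (Finset ℕ × ℕ)) := by
    rintro ⟨f, j⟩ hp ⟨f', j'⟩ hq h
    rw [Finset.mem_coe, Finset.mem_product, Finset.mem_powersetCard, Finset.mem_Icc] at hp hq
    have h : insert j f = insert j' f' := h
    have hjj : j = j' := by
      have hmem : j ∈ insert j' f' := h ▸ Finset.mem_insert_self j f
      rcases Finset.mem_insert.1 hmem with h1 | h1
      · exact h1
      · have := (Finset.mem_Icc.1 (hq.1.1 h1)).1; omega
    subst hjj
    have hjf : j ∉ f := by
      intro hmem; have := (Finset.mem_Icc.1 (hp.1.1 hmem)).1; omega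
    have hjf' : j ∉ f' := by
      intro hmem; have := (Finset.mem_Icc.1 (hq.1.1 hmem)).1; omega
    have hff : f = f' := by
      have h2 := congrArg (fun s => Finset.erase s j) h
      simpa [Finset.erase_insert, hjf, hjf'] using h2
    simp [hff]
  have c3 : F₃.card = t.choose (r - 1) * (k - t - 1) := by
    rw [hF₃, Finset.card_image_of_injOn inj3, Finset.card_product,
      Finset.card_powersetCard, Nat.card_Icc, Nat.card_Icc]
    have e1 : k - 1 + 1 - (k - t) = t := by omega
    have e2 : k - t - 1 + 1 - 1 = k - t - 1 := by omega
    rw [e1, e2]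
  -- the union sits inside the powerset of [1, k-1]
  have hsub : F₁ ∪ F₂ ∪ F₃ ⊆ (Finset.Icc 1 (k - 1)).powersetCard r := by
    intro s hs
    rw [Finset.mem_powersetCard]
    rcases Finset.mem_union.1 hs with hs | hs3
    · rcases Finset.mem_union.1 hs with hs1 | hs2
      · obtain ⟨hsub, hcard⟩ := mem1 s hs1
        refine ⟨fun x hx => ?_, hcard⟩
        have := Finset.mem_Icc.1 (hsub hx)
        rw [Finset.mem_Icc]; omega
      · obtain ⟨e, i, he, hcard, hi1, hi2, rfl⟩ := mem2 s hs2
        have hie : i ∉ e := by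
          intro hmem; have := (Finset.mem_Icc.1 (he hmem)).2; omega
        constructor
        · intro x hx
          rcases Finset.mem_insert.1 hx with h | h
          · rw [Finset.mem_Icc]; omega
          · have := Finset.mem_Icc.1 (he h); rw [Finset.mem_Icc]; omega
        · rw [Finset.card_insert_of_notMem hie, hcard]; omega
    · obtain ⟨f, j, hf, hcard, hj1, hj2, rfl⟩ := mem3 s hs3
      have hjf : j ∉ f := by
        intro hmem; have := (Finset.mem_Icc.1 (hf hmem)).1; omega
      constructor
      · intro x hx
        rcases Finset.mem_insert.1 hx with h | h
        · rw [Finset.mem_Icc]; omega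
        · have := Finset.mem_Icc.1 (hf h); rw [Finset.mem_Icc]; omega
      · rw [Finset.card_insert_of_notMem hjf, hcard]; omega
  refine ⟨⟨d12, d13, d23⟩, ?_⟩
  have hU := Finset.card_le_card hsub
  rw [Finset.card_powersetCard, Nat.card_Icc] at hU
  have hd : Disjoint (F₁ ∪ F₂) F₃ := by
    rw [Finset.disjoint_union_left]; exact ⟨d13, d23⟩
  rw [Finset.card_union_of_disjoint hd, Finset.card_union_of_disjoint d12,
    c1, c2, c3] at hU
  have hch : k - 1 + 1 - 1 = k - 1 := by omega
  rw [hch] at hU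
  calc (k - t).choose r + (t - 1) * t.choose (r - 1) + (k - t - 1) * t.choose (r - 1)
      = (k - t).choose r + t.choose (r - 1) * (t - 1) + t.choose (r - 1) * (k - t - 1) := by
        ring
    _ ≤ (k - 1).choose r := hU
end

section
/- Let r ≥ 3, k ≥ r+4 be integers and x a real number with 0 ≤ x ≤ k-2. Define the real binomial polynomial b(x, r) = x(x-1)···(x-r+1)/r! for x ≥ r-1 and b(x,r) = 0 otherwise, and similarly b(x,2). Then C(k-1, 2) - b(x, 2) + b(x, r) ≤ C(k-1,2) - C(k-2, 2) + C(k-2, r), i.e., the function x ↦ -b(x,2) + b(x,r) on [0, k-2] is maximized at x = k-2. -/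
/-- The real "binomial polynomial" `b(x, r) = x(x-1)⋯(x-r+1)/r!` for `x ≥ r-1`,
and `0` otherwise. -/
noncomputable def realBinom (x : ℝ) (r : ℕ) : ℝ :=
  if (r : ℝ) - 1 ≤ x then (∏ i ∈ Finset.range r, (x - i)) / (r.factorial : ℝ) else 0

lemma prod_cast_nat (n r : ℕ) (h : r ≤ n) :
    ∏ i ∈ Finset.range r, ((n : ℝ) - i) = (n.descFactorial r : ℝ) := by
  rw [Nat.descFactorial_eq_prod_range, Nat.cast_prod]
  refine Finset.prod_congr rfl fun i hi => ?_
  rw [Nat.cast_sub (le_of_lt (lt_of_lt_of_le (Finset.mem_range.1 hi) h))]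

lemma realBinom_nat (n r : ℕ) (h : r ≤ n) :
    realBinom (n : ℝ) r = (n.choose r : ℝ) := by
  rw [realBinom, if_pos, prod_cast_nat n r h, Nat.descFactorial_eq_factorial_mul_choose]
  · push_cast
    field_simp
  · have : (r : ℝ) ≤ n := by exact_mod_cast h
    linarith

lemma realBinom_two (y : ℝ) (hy : 1 ≤ y) : realBinom y 2 = y * (y - 1) / 2 := by
  rw [realBinom, if_pos (by norm_num; linarith)]
  simp [Finset.prod_range_succ, Nat.factorial]

lemma realBinom_two_nonneg (y : ℝ) : 0 ≤ realBinom y 2 := by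
  rw [realBinom]
  split
  · next h =>
    have : (1:ℝ) ≤ y := by norm_num at h; linarith
    have : 0 ≤ ∏ i ∈ Finset.range 2, (y - i) := by
      simp [Finset.prod_range_succ]; nlinarith
    positivity
  · exact le_refl 0

lemma realBinom_split (r : ℕ) (hr : 3 ≤ r) (y : ℝ) (hy : (r : ℝ) - 1 ≤ y) :
    realBinom y r = (y * (y - 1) / 2) *
      ((∏ i ∈ Finset.range (r - 2), (y - ((i : ℝ) + 2))) * 2 / (r.factorial : ℝ)) := by
  rw [realBinom, if_pos hy]
  obtain ⟨m, rfl⟩ : ∃ m, r = 2 + m := ⟨r - 2, by omega⟩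
  rw [Finset.prod_range_add]
  have : (2 + m - 2) = m := by omega
  rw [this]
  have hf : (0:ℝ) < ((2+m).factorial : ℝ) := by positivity
  have : ∏ i ∈ Finset.range m, (y - ((2 + i : ℕ) : ℝ)) =
      ∏ i ∈ Finset.range m, (y - ((i : ℝ) + 2)) := by
    refine Finset.prod_congr rfl fun i _ => by push_cast; ring
  rw [this]
  simp [Finset.prod_range_succ]
  field_simp

lemma aux_mono (a b u v : ℝ) (ha : 0 ≤ a) (hab : a ≤ b) (huv : u ≤ v) (hv : 1 ≤ v) :
    a * u - a ≤ b * v - b := by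
  rcases le_or_gt 1 u with h | h
  · nlinarith
  · nlinarith

theorem stmt_17 (r k : ℕ) (hr : 3 ≤ r) (hk : r + 4 ≤ k)
    (x : ℝ) (hx0 : 0 ≤ x) (hx1 : x ≤ (k : ℝ) - 2) :
    ((k - 1).choose 2 : ℝ) - realBinom x 2 + realBinom x r ≤
      ((k - 1).choose 2 : ℝ) - (k - 2).choose 2 + (k - 2).choose r := by
  set t : ℝ := (k : ℝ) - 2 with ht
  have hkr : (r : ℝ) + 4 ≤ (k : ℝ) := by exact_mod_cast hk
  have hr3 : (3 : ℝ) ≤ (r : ℝ) := by exact_mod_cast hr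
  have htr : (r : ℝ) - 1 ≤ t := by simp [ht]; linarith
  have hcast : ((k - 2 : ℕ) : ℝ) = t := by
    have : 2 ≤ k := by omega
    push_cast [Nat.cast_sub this]; ring
  have h2 : realBinom t 2 = ((k - 2).choose 2 : ℝ) := by
    rw [← hcast, realBinom_nat _ 2 (by omega)]
  have hrk : realBinom t r = ((k - 2).choose r : ℝ) := by
    rw [← hcast, realBinom_nat _ r (by omega)]
  rw [← h2, ← hrk]
  -- define g
  set g : ℝ → ℝ := fun y =>
    (∏ i ∈ Finset.range (r - 2), (y - ((i : ℝ) + 2))) * 2 / (r.factorial : ℝ) with hg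
  have hfac : (0:ℝ) < (r.factorial : ℝ) := by positivity
  -- g t ≥ 1
  have hgt1 : 1 ≤ g t := by
    have hprod : ((r.factorial : ℝ)) / 2 ≤ ∏ i ∈ Finset.range (r - 2), (t - ((i : ℝ) + 2)) := by
      have hr2 : ∏ i ∈ Finset.range (r - 2), ((r : ℝ) - i) = (r.factorial : ℝ) / 2 := by
        rw [prod_cast_nat r (r - 2) (by omega)]
        have h1 : (r - (r - 2)) = 2 := by omega
        have := Nat.factorial_mul_descFactorial (show r - 2 ≤ r by omega)
        rw [h1] at this
        have : (2 : ℕ).factorial * r.descFactorial (r - 2) = r.factorial := this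
        have h2 : (2:ℝ) * (r.descFactorial (r - 2) : ℝ) = (r.factorial : ℝ) := by
          exact_mod_cast this
        linarith
      rw [← hr2]
      refine Finset.prod_le_prod (fun i hi => ?_) (fun i hi => ?_)
      · have hi' : (i : ℝ) ≤ (r : ℝ) - 3 := by
          have : i ≤ r - 3 := by have := Finset.mem_range.1 hi; omega
          have : (i : ℝ) ≤ ((r - 3 : ℕ) : ℝ) := by exact_mod_cast this
          have h3 : ((r - 3 : ℕ) : ℝ) = (r : ℝ) - 3 := by
            push_cast [Nat.cast_sub (show 3 ≤ r from hr)]; ring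
          linarith
        linarith
      · simp [ht]; linarith
    show (1:ℝ) ≤ (∏ i ∈ Finset.range (r - 2), (t - ((i : ℝ) + 2))) * 2 / (r.factorial : ℝ)
    rw [le_div_iff₀ hfac]
    linarith
  have hbt2 : 0 ≤ realBinom t 2 := realBinom_two_nonneg t
  by_cases hxr : (r : ℝ) - 1 ≤ x
  · -- main case
    have hx1' : 1 ≤ x := by linarith
    have ht1 : 1 ≤ t := by linarith
    have hbx : realBinom x r = realBinom x 2 * g x := by
      rw [realBinom_split r hr x hxr, realBinom_two x hx1', hg]
    have hbtr : realBinom t r = realBinom t 2 * g t := by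
      rw [realBinom_split r hr t htr, realBinom_two t ht1, hg]
    have hb2le : realBinom x 2 ≤ realBinom t 2 := by
      rw [realBinom_two x hx1', realBinom_two t ht1]; nlinarith
    have hgle : g x ≤ g t := by
      rw [hg]
      have hprod : ∏ i ∈ Finset.range (r - 2), (x - ((i : ℝ) + 2)) ≤
          ∏ i ∈ Finset.range (r - 2), (t - ((i : ℝ) + 2)) := by
        refine Finset.prod_le_prod (fun i hi => ?_) (fun i hi => ?_)
        · have : (i : ℝ) ≤ (r : ℝ) - 3 := by
            have h' : i ≤ r - 3 := by have := Finset.mem_range.1 hi; omega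
            have h'' : (i : ℝ) ≤ ((r - 3 : ℕ) : ℝ) := by exact_mod_cast h'
            have h3 : ((r - 3 : ℕ) : ℝ) = (r : ℝ) - 3 := by
              push_cast [Nat.cast_sub (show 3 ≤ r from hr)]; ring
            linarith
          linarith
        · linarith
      show _ / (r.factorial : ℝ) ≤ _ / (r.factorial : ℝ)
      rw [div_le_div_iff₀ hfac hfac]
      nlinarith [mul_le_mul_of_nonneg_right hprod hfac.le]
    have hbx0 : 0 ≤ realBinom x 2 := realBinom_two_nonneg x
    rw [hbx, hbtr]
    have key := aux_mono (realBinom x 2) (realBinom t 2) (g x) (g t) hbx0 hb2le hgle hgt1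
    linarith [key]
  · -- x < r - 1: realBinom x r = 0
    have hzero : realBinom x r = 0 := by rw [realBinom, if_neg hxr]
    have hbx0 : 0 ≤ realBinom x 2 := realBinom_two_nonneg x
    have ht1 : 1 ≤ t := by linarith
    have hbtr : realBinom t r = realBinom t 2 * g t := by
      rw [realBinom_split r hr t htr, realBinom_two t ht1, hg]
    have : realBinom t 2 ≤ realBinom t r := by
      rw [hbtr]
      have h := mul_le_mul_of_nonneg_left hgt1 hbt2
      rw [mul_one] at h
      linarith
    rw [hzero]
    linarith
end

section
/- For integers r ≥ 3 and k ≥ r+4: C(k-1,2) - C(k-2,2) + C(k-2,r) < C(k-1,r) - C(r,2). -/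
lemma aux_base (r : ℕ) (hr : 3 ≤ r) : r + 2 + r.choose 2 < (r + 2).choose 3 := by
  induction r, hr using Nat.le_induction with
  | base => decide
  | succ r hr ih =>
    have h1 : (r + 1 + 2).choose 3 = (r + 2).choose 2 + (r + 2).choose 3 := by
      show (r + 2 + 1).choose (2 + 1) = _
      rw [Nat.choose_succ_succ]
    have h2 : (r + 1).choose 2 = r.choose 1 + r.choose 2 := Nat.choose_succ_succ r 1
    have h3 : r + 1 ≤ (r + 2).choose 2 := by
      have : (r + 2).choose 2 = (r+2) * (r+1) / 2 := by
        rw [Nat.choose_two_right]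
        simp
      rw [this]
      have : (r + 1) * 2 ≤ (r + 2) * (r + 1) := by nlinarith
      omega
    rw [h1, h2, Nat.choose_one_right]
    omega

lemma aux (r n : ℕ) (hr : 3 ≤ r) (hn : r + 2 ≤ n) :
    n + r.choose 2 < n.choose (r - 1) := by
  induction n, hn using Nat.le_induction with
  | base =>
    have hsym : (r + 2).choose (r - 1) = (r + 2).choose 3 := by
      have h : r - 1 = (r + 2) - 3 := by omega
      rw [h]
      exact Nat.choose_symm (by omega)
    rw [hsym]
    exact aux_base r hr
  | succ n hn ih =>
    have h1 : (n + 1).choose (r - 1) = n.choose (r - 2) + n.choose (r - 1) := by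
      have : r - 1 = (r - 2) + 1 := by omega
      rw [this, Nat.choose_succ_succ]
    have h2 : 1 ≤ n.choose (r - 2) := Nat.choose_pos (by omega)
    omega

theorem stmt_18 (r k : ℕ) (hr : 3 ≤ r) (hk : r + 4 ≤ k) :
    ((k - 1).choose 2 : ℤ) - (k - 2).choose 2 + (k - 2).choose r <
      (k - 1).choose r - r.choose 2 := by
  set n := k - 2 with hn
  have hk1 : k - 1 = n + 1 := by omega
  have hr1 : r = (r - 1) + 1 := by omega
  have e1 : (n + 1).choose 2 = n.choose 1 + n.choose 2 := Nat.choose_succ_succ n 1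
  have e2 : (n + 1).choose r = n.choose (r - 1) + n.choose r := by
    rw [hr1, Nat.choose_succ_succ]
    rfl
  have key : n + r.choose 2 < n.choose (r - 1) := aux r n hr (by omega)
  rw [hk1, e1, e2, Nat.choose_one_right]
  push_cast
  have : (n : ℤ) + r.choose 2 < n.choose (r - 1) := by exact_mod_cast key
  linarith
end
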